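/- arXiv:1904.09771 — 10 statements merged into one kernel-verified Lean document; each statement's English description precedes it below -/
import Mathlib

section
/- Let T = node(T_a, T_b) be a full binary tree with n leaves (so T_a and T_b are its two maximal pending subtrees, with n_a and n_b leaves respectively). If T has minimal Colless index for n leaves, i.e. C(T) = c(n), then C(T_a) = c(n_a) and C(T_b) = c(n_b), i.e. both maximal pending subtrees have minimal Colless index for their respective numbers of leaves. -/
/-- Full binary trees: either a single leaf, or a node with two full binary subtrees. -/
inductive FBT : Type
  | leaf : FBT
  | node : FBT → FBT → FBT

namespace FBT

/-- Number of leaves of a full binary tree. -/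
def leaves : FBT → ℕ
  | leaf => 1
  | node a b => leaves a + leaves b

/-- The Colless index: the sum over internal nodes of the absolute difference of the
numbers of leaves of the two maximal pending subtrees. -/
def colless : FBT → ℕ
  | leaf => 0
  | node a b => colless a + colless b + Nat.dist (leaves a) (leaves b)

end FBT

/-- The minimal Colless index over all full binary trees with `n` leaves. -/
noncomputable def minColless (n : ℕ) : ℕ :=
  sInf {m : ℕ | ∃ T : FBT, T.leaves = n ∧ T.colless = m}

/-! Replacing a maximal pending subtree by a minimal one with the same number of leaves
keeps the number of leaves and the balance term at the root, so it can only lower the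
Colless index; hence at a minimal tree neither subtree can be improved. -/

namespace FBT

theorem minColless_leaves_le_colless (T : FBT) : minColless T.leaves ≤ T.colless :=
  Nat.sInf_le ⟨T, rfl, rfl⟩

theorem exists_leaves_eq_colless_eq_minColless (T : FBT) :
    ∃ T' : FBT, T'.leaves = T.leaves ∧ T'.colless = minColless T.leaves :=
  Nat.sInf_mem (s := {m : ℕ | ∃ T' : FBT, T'.leaves = T.leaves ∧ T'.colless = m})
    ⟨T.colless, T, rfl, rfl⟩

theorem minColless_leaves_node_le (a b : FBT) :
    minColless (node a b).leaves ≤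
      minColless a.leaves + minColless b.leaves + Nat.dist a.leaves b.leaves := by
  obtain ⟨a', ha'_leaves, ha'_colless⟩ := exists_leaves_eq_colless_eq_minColless a
  obtain ⟨b', hb'_leaves, hb'_colless⟩ := exists_leaves_eq_colless_eq_minColless b
  have h := minColless_leaves_le_colless (node a' b')
  simpa only [leaves, colless, ha'_leaves, hb'_leaves, ha'_colless, hb'_colless] using h

end FBT

theorem subtrees_of_min_colless_are_min (a b : FBT)
    (h : (FBT.node a b).colless = minColless ((FBT.node a b).leaves)) :
    a.colless = minColless a.leaves ∧ b.colless = minColless b.leaves := by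
  have h_node := FBT.minColless_leaves_node_le a b
  have ha := FBT.minColless_leaves_le_colless a
  have hb := FBT.minColless_leaves_le_colless b
  rw [← h, FBT.colless] at h_node
  omega
end

section
/- The minimal Colless index satisfies c(1) = c(2) = 0, and for all natural numbers n ≥ 1 the recursions c(2n) = 2·c(n) and c(2n+1) = c(n+1) + c(n) + 1 hold. -/
/-!
The maximally balanced tree, which splits `n` leaves into `⌊n/2⌋` and `⌈n/2⌉` at every node,
attains the minimum, and its Colless index `b n` obeys the claimed recursion by construction.
Minimality of `b` reduces, by induction on trees, to `b (p + q) ≤ b p + b q + |p - q|`. This is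
proved by strong induction on `p + q`: halve `p` and `q` and recombine the halves crosswise,
`⌊p/2⌋ + ⌈q/2⌉` and `⌈p/2⌉ + ⌊q/2⌋`, which are the two halves of `p + q` in some order.
-/

namespace FBT

def balanced : ℕ → FBT
  | 0 => leaf
  | 1 => leaf
  | n + 2 => node (balanced ((n + 2) / 2)) (balanced ((n + 3) / 2))

@[simp] lemma balanced_zero : balanced 0 = leaf := by rw [balanced]

@[simp] lemma balanced_one : balanced 1 = leaf := by rw [balanced]

lemma leaves_balanced {n : ℕ} (hn : 1 ≤ n) : (balanced n).leaves = n := by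
  induction n using Nat.strong_induction_on with
  | _ n ih =>
    match n, hn with
    | 1, _ => simp [leaves]
    | n + 2, _ =>
      rw [balanced, leaves, ih _ (by omega) (by omega), ih _ (by omega) (by omega)]
      omega

lemma colless_balanced {n : ℕ} (hn : 2 ≤ n) :
    (balanced n).colless =
      (balanced (n / 2)).colless + (balanced ((n + 1) / 2)).colless + n % 2 := by
  obtain ⟨n, rfl⟩ := Nat.exists_eq_add_of_le' hn
  rw [balanced, colless, leaves_balanced (by omega), leaves_balanced (by omega),
    show (n + 2 + 1) / 2 = (n + 3) / 2 from rfl]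
  simp only [Nat.dist]
  omega

lemma colless_balanced_of_add_eq {x y n : ℕ} (hxy : x + y = n) (hx : 1 ≤ x) (hy : 1 ≤ y)
    (hdist : x.dist y ≤ 1) :
    (balanced n).colless = (balanced x).colless + (balanced y).colless + x.dist y := by
  rw [colless_balanced (by omega)]
  simp only [Nat.dist] at hdist ⊢
  rcases le_total x y with h | h
  · rw [show n / 2 = x by omega, show (n + 1) / 2 = y by omega]
    omega
  · rw [show n / 2 = y by omega, show (n + 1) / 2 = x by omega]
    omega

theorem colless_balanced_add_le (p q : ℕ) :
    (balanced (p + q)).colless ≤ (balanced p).colless + (balanced q).colless + p.dist q := by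
  induction hn : p + q using Nat.strong_induction_on generalizing p q with
  | _ n ih =>
    subst hn
    wlog hpq : p ≤ q generalizing p q
    · have := this q p (by rwa [add_comm]) (by omega)
      rw [add_comm q p, Nat.dist_comm] at this
      omega
    rcases Nat.lt_or_ge p 2 with hp | hp
    · interval_cases p
      · simp [colless, Nat.dist]
      rcases Nat.lt_or_ge q 2 with hq | hq
      · exact (colless_balanced_of_add_eq rfl le_rfl (by omega) (by simp only [Nat.dist]; omega)).le
      -- `1 + q` splits as `⌈q/2⌉ + (⌊q/2⌋ + 1)`, and the second part is bounded by the `p = 1` case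
      have h := ih ((q + 1 + 1) / 2) (by omega) (q / 2) 1 (by omega)
      rw [add_comm 1 q, colless_balanced (by omega), colless_balanced hq]
      simp only [balanced_one, colless, Nat.dist] at h ⊢
      omega
    · have hsplit := colless_balanced_of_add_eq (x := p / 2 + (q + 1) / 2)
        (y := (p + 1) / 2 + q / 2) (n := p + q) (by omega) (by omega) (by omega)
        (by simp only [Nat.dist]; omega)
      have h₁ := ih (p / 2 + (q + 1) / 2) (by omega) (p / 2) ((q + 1) / 2) rfl
      have h₂ := ih ((p + 1) / 2 + q / 2) (by omega) ((p + 1) / 2) (q / 2) rfl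
      rw [hsplit, colless_balanced hp, colless_balanced (hp.trans hpq)]
      simp only [Nat.dist] at h₁ h₂ ⊢
      omega

lemma colless_balanced_leaves_le (T : FBT) : (balanced T.leaves).colless ≤ T.colless := by
  induction T with
  | leaf => simp [leaves, colless]
  | node a b iha ihb =>
    have := colless_balanced_add_le a.leaves b.leaves
    simp only [leaves, colless]
    omega

end FBT

lemma minColless_eq_colless_balanced {n : ℕ} (hn : 1 ≤ n) :
    minColless n = (FBT.balanced n).colless :=
  IsLeast.csInf_eq ⟨⟨_, FBT.leaves_balanced hn, rfl⟩,
    by rintro _ ⟨T, rfl, rfl⟩; exact FBT.colless_balanced_leaves_le T⟩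

lemma minColless_add_of_dist_le_one {x y : ℕ} (hx : 1 ≤ x) (hy : 1 ≤ y) (hdist : x.dist y ≤ 1) :
    minColless (x + y) = minColless x + minColless y + x.dist y := by
  rw [minColless_eq_colless_balanced (by omega), minColless_eq_colless_balanced hx,
    minColless_eq_colless_balanced hy]
  exact FBT.colless_balanced_of_add_eq rfl hx hy hdist

theorem minColless_recursion :
    minColless 1 = 0 ∧ minColless 2 = 0 ∧
      ∀ n : ℕ, 1 ≤ n →
        minColless (2 * n) = 2 * minColless n ∧
        minColless (2 * n + 1) = minColless (n + 1) + minColless n + 1 := by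
  have h₁ : minColless 1 = 0 := by
    simp [minColless_eq_colless_balanced, FBT.colless]
  refine ⟨h₁, ?_, fun n hn => ⟨?_, ?_⟩⟩
  · simpa [h₁] using minColless_add_of_dist_le_one le_rfl le_rfl (by simp)
  · simpa [two_mul] using minColless_add_of_dist_le_one hn hn (by simp)
  · have h := minColless_add_of_dist_le_one hn (by omega : 1 ≤ n + 1) (by simp [Nat.dist])
    rw [show n + (n + 1) = 2 * n + 1 by ring, show n.dist (n + 1) = 1 by simp [Nat.dist]] at h
    omega
end

section
/- For every n ≥ 1, with k = ⌈log₂ n⌉, the minimal Colless index has the explicit expression c(n) = ∑_{i=0}^{k−2} s(2^{i−k+1}·n) / 2^{i−k+1}, where the sum is empty (equal to 0) when k ≤ 1. -/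
/-- `s x`: the distance from the real number `x` to the nearest integer,
i.e. `min_{z ∈ ℤ} |x - z|`. -/
noncomputable def distNearestInt (x : ℝ) : ℝ := ⨅ z : ℤ, |x - (z : ℝ)|


def F (n : ℕ) : ℕ :=
  if n ≤ 1 then 0 else F ((n+1)/2) + F (n/2) + n % 2
decreasing_by all_goals omega

lemma F_zero : F 0 = 0 := by rw [F]; simp
lemma F_one : F 1 = 0 := by rw [F]; simp

lemma F_even (m : ℕ) : F (2*m) = 2 * F m := by
  rcases Nat.eq_zero_or_pos m with h | h
  · simp [h, F_zero]
  · rw [F]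
    have h1 : ¬ (2*m ≤ 1) := by omega
    have h2 : (2*m+1)/2 = m := by omega
    have h3 : (2*m)/2 = m := by omega
    have h4 : (2*m) % 2 = 0 := by omega
    rw [if_neg h1, h2, h3, h4]
    omega

lemma F_odd (m : ℕ) (hm : 1 ≤ m) : F (2*m+1) = F (m+1) + F m + 1 := by
  rw [F]
  have h1 : ¬ (2*m+1 ≤ 1) := by omega
  have h2 : (2*m+1+1)/2 = m+1 := by omega
  have h3 : (2*m+1)/2 = m := by omega
  have h4 : (2*m+1) % 2 = 1 := by omega
  rw [if_neg h1, h2, h3, h4]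

lemma F_mixed {n : ℕ}
    (ih : ∀ m, m < n → ∀ a b, a + b = m → F m ≤ F a + F b + Nat.dist a b)
    (x y : ℕ) (hx : 1 ≤ x) (hn : 2*x + (2*y+1) = n) :
    F n ≤ F (2*x) + F (2*y+1) + Nat.dist (2*x) (2*y+1) := by
  rcases Nat.eq_zero_or_pos y with hy | hy
  · subst hy
    have hfn : F n = F (x+1) + F x + 1 := by rw [← hn]; simpa using F_odd x hx
    have h := ih (x+1) (by omega) x 1 rfl
    have h2 : F (2*x) = 2 * F x := F_even x
    have h3 : F (2*0+1) = 0 := by norm_num [F_one]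
    have h4 : F 1 = 0 := F_one
    simp only [Nat.dist] at *
    omega
  · have hfn : F n = F (x+y+1) + F (x+y) + 1 := by
      have : n = 2*(x+y)+1 := by omega
      rw [this, F_odd _ (by omega)]
    have h1 := ih (x+y) (by omega) x y rfl
    have h2 := ih (x+y+1) (by omega) x (y+1) rfl
    have h3 : F (2*x) = 2 * F x := F_even x
    have h4 : F (2*y+1) = F (y+1) + F y + 1 := F_odd y hy
    simp only [Nat.dist] at *
    omega

lemma F_subadd (n : ℕ) : ∀ a b, a + b = n → F n ≤ F a + F b + Nat.dist a b := by
  induction n using Nat.strong_induction_on with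
  | _ n ih =>
    intro a b hab
    rcases Nat.eq_zero_or_pos a with ha | ha
    · subst ha
      obtain rfl : b = n := by omega
      simp only [Nat.dist, F_zero]; omega
    rcases Nat.eq_zero_or_pos b with hb | hb
    · subst hb
      obtain rfl : a = n := by omega
      simp only [Nat.dist, F_zero]; omega
    rcases Nat.even_or_odd a with ⟨x, hx⟩ | ⟨x, hx⟩ <;>
      rcases Nat.even_or_odd b with ⟨y, hy⟩ | ⟨y, hy⟩
    · -- even, even
      have hfn : F n = 2 * F (x+y) := by
        have : n = 2*(x+y) := by omega
        rw [this, F_even]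
      have h1 := ih (x+y) (by omega) x y rfl
      have h2 : F a = 2 * F x := by rw [show a = 2*x by omega, F_even]
      have h3 : F b = 2 * F y := by rw [show b = 2*y by omega, F_even]
      simp only [Nat.dist] at *
      omega
    · -- even, odd
      have := F_mixed ih x y (by omega) (by omega)
      rw [show a = 2*x by omega, show b = 2*y+1 by omega]
      convert this using 2 <;> omega
    · -- odd, even
      have := F_mixed ih y x (by omega) (by omega)
      rw [show a = 2*x+1 by omega, show b = 2*y by omega, Nat.dist_comm]
      have hn' : n = 2*y + (2*x+1) := by omega
      rw [hn'] at this ⊢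
      omega
    · -- odd, odd
      have hfn : F n = 2 * F (x+y+1) := by
        rw [show n = 2*(x+y+1) by omega, F_even]
      rcases Nat.eq_zero_or_pos x with hx0 | hx0 <;> rcases Nat.eq_zero_or_pos y with hy0 | hy0
      · -- a = b = 1, n = 2
        subst hx0; subst hy0
        simp only [Nat.zero_add] at hfn
        have h1 : F 1 = 0 := F_one
        simp only [Nat.dist] at *
        omega
      · -- a = 1
        subst hx0
        simp only [Nat.zero_add] at hfn
        have h3 := ih (y+1) (by omega) y 1 rfl
        have hb' : F b = F (y+1) + F y + 1 := by rw [show b = 2*y+1 by omega, F_odd y hy0]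
        have ha' : F a = 0 := by rw [show a = 1 by omega, F_one]
        have h1 : F 1 = 0 := F_one
        simp only [Nat.dist] at *
        omega
      · -- b = 1
        subst hy0
        simp only [Nat.add_zero] at hfn
        have h3 := ih (x+1) (by omega) x 1 rfl
        have ha' : F a = F (x+1) + F x + 1 := by rw [show a = 2*x+1 by omega, F_odd x hx0]
        have hb' : F b = 0 := by rw [show b = 1 by omega, F_one]
        have h1 : F 1 = 0 := F_one
        simp only [Nat.dist] at *
        omega
      · have h1 := ih (x+y+1) (by omega) x (y+1) rfl
        have h2 := ih (x+y+1) (by omega) (x+1) y (by omega)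
        have ha' : F a = F (x+1) + F x + 1 := by rw [show a = 2*x+1 by omega, F_odd x hx0]
        have hb' : F b = F (y+1) + F y + 1 := by rw [show b = 2*y+1 by omega, F_odd y hy0]
        simp only [Nat.dist] at *
        omega


def mterm (n j : ℕ) : ℕ := min (n % 2^j) (2^j - n % 2^j)
def H (n J : ℕ) : ℕ := ∑ j ∈ Finset.range J, mterm n (j+1)
def G (n : ℕ) : ℕ := H n (Nat.clog 2 n - 1)

lemma clog2_double (m : ℕ) (hm : 1 ≤ m) : Nat.clog 2 (2*m) = Nat.clog 2 m + 1 := by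
  rw [Nat.clog_of_two_le (by norm_num) (by omega)]
  congr 2
  omega

lemma clog2_odd (m : ℕ) (hm : 1 ≤ m) : Nat.clog 2 (2*m+1) = Nat.clog 2 (m+1) + 1 := by
  rw [Nat.clog_of_two_le (by norm_num) (by omega)]
  congr 2
  omega

lemma mterm_even (m j : ℕ) : mterm (2*m) (j+1) = 2 * mterm m j := by
  have hP : 0 < 2^j := Nat.pow_pos (by norm_num)
  have hr : m % 2^j < 2^j := Nat.mod_lt _ hP
  have h1 : (2*m) % 2^(j+1) = 2 * (m % 2^j) := by
    rw [pow_succ, mul_comm (2^j) 2]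
    exact Nat.mul_mod_mul_left 2 m (2^j)
  unfold mterm
  rw [h1, pow_succ, mul_comm (2^j) 2]
  omega

lemma mterm_odd (m j : ℕ) (hj : 1 ≤ j) :
    mterm (2*m+1) (j+1) = mterm m j + mterm (m+1) j := by
  have hP : 0 < 2^j := Nat.pow_pos (by norm_num)
  have h2 : 2 ≤ 2^j := by
    calc 2 = 2^1 := rfl
    _ ≤ 2^j := Nat.pow_le_pow_right (by norm_num) hj
  have hev : 2^j % 2 = 0 := by
    rcases Nat.exists_eq_add_of_le hj with ⟨j', rfl⟩
    rw [pow_add]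
    simp [Nat.mul_mod_right]
  obtain ⟨q, r, hr, rfl⟩ : ∃ q r, r < 2^j ∧ m = 2^j * q + r :=
    ⟨m / 2^j, m % 2^j, Nat.mod_lt _ hP, (Nat.div_add_mod m (2^j)).symm⟩
  set P := 2^j with hPdef
  have hmod1 : (2^j * q + r) % P = r := by
    rw [← hPdef, mul_comm P q, Nat.mul_add_mod' q P r, Nat.mod_eq_of_lt hr]
  have hmod2 : (2^j * q + r + 1) % P = (r+1) % P := by
    rw [← hPdef, add_assoc, mul_comm P q, Nat.mul_add_mod' q P (r+1)]
  have hmod3 : (2*(2^j * q + r)+1) % 2^(j+1) = 2*r+1 := by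
    have e : 2*(2^j * q + r)+1 = q * 2^(j+1) + (2*r+1) := by ring
    rw [e, Nat.mul_add_mod' q (2^(j+1)) (2*r+1), Nat.mod_eq_of_lt]
    rw [pow_succ]
    omega
  unfold mterm
  rw [hmod1, hmod2, hmod3]
  have hPP : 2^(j+1) = 2*P := by rw [pow_succ]; ring
  rw [hPP]
  rcases eq_or_lt_of_le (Nat.succ_le_of_lt hr) with h3 | h3
  · have h4 : (r+1) % P = 0 := by have : r+1 = P := h3; rw [this, Nat.mod_self]
    rw [h4]; omega
  · have h4 : (r+1) % P = r+1 := Nat.mod_eq_of_lt h3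
    rw [h4]; omega

lemma G_one : G 1 = 0 := by
  unfold G H
  rw [Nat.clog_one_right]
  simp

lemma G_even (m : ℕ) (hm : 1 ≤ m) : G (2*m) = 2 * G m := by
  unfold G
  rw [clog2_double m hm]
  simp only [Nat.add_sub_cancel]
  rcases Nat.eq_zero_or_pos (Nat.clog 2 m) with h0 | h0
  · rw [h0]; simp [H]
  · obtain ⟨c, hc⟩ : ∃ c, Nat.clog 2 m = c + 1 := ⟨Nat.clog 2 m - 1, by omega⟩
    rw [hc]
    simp only [Nat.add_sub_cancel]
    unfold H
    rw [Finset.sum_range_succ']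
    have e0 : mterm (2*m) 1 = 0 := by
      unfold mterm
      have : (2*m) % 2^1 = 0 := by omega
      rw [this]; simp
    rw [e0, add_zero, Finset.mul_sum]
    apply Finset.sum_congr rfl
    intro i _
    exact mterm_even m (i+1)

lemma G_odd (m : ℕ) (hm : 1 ≤ m) : G (2*m+1) = G m + G (m+1) + 1 := by
  have hc1 : 0 < Nat.clog 2 (m+1) := Nat.clog_pos (by norm_num) (by omega)
  obtain ⟨c, hc⟩ : ∃ c, Nat.clog 2 (m+1) = c + 1 := ⟨Nat.clog 2 (m+1) - 1, by omega⟩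
  have key : G (2*m+1) = H m c + H (m+1) c + 1 := by
    unfold G
    rw [clog2_odd m hm, hc]
    simp only [Nat.add_sub_cancel]
    unfold H
    rw [Finset.sum_range_succ']
    have e1 : mterm (2*m+1) 1 = 1 := by
      unfold mterm
      have : (2*m+1) % 2^1 = 1 := by omega
      rw [this]; norm_num
    rw [e1]
    have : ∀ i ∈ Finset.range c, mterm (2*m+1) (i+1+1) = mterm m (i+1) + mterm (m+1) (i+1) :=
      fun i _ => mterm_odd m (i+1) (by omega)
    rw [Finset.sum_congr rfl this, Finset.sum_add_distrib]
  rw [key]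
  have hGm1 : G (m+1) = H (m+1) c := by unfold G; rw [hc]; simp
  have hGm : G m = H m c := by
    have hle : Nat.clog 2 m ≤ c + 1 := hc ▸ Nat.clog_mono_right 2 (by omega)
    have hge : c ≤ Nat.clog 2 m := by
      have h1 : m + 1 ≤ 2 ^ (Nat.clog 2 m + 1) := by
        have := Nat.le_pow_clog (b := 2) (by norm_num) m
        have h2 : (1:ℕ) ≤ 2 ^ Nat.clog 2 m := Nat.one_le_two_pow
        rw [pow_succ]
        omega
      have := (Nat.clog_le_iff_le_pow (by norm_num)).mpr h1
      omega
    rcases eq_or_lt_of_le hge with heq | hlt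
    · -- clog 2 m = c: but G m = H m (clog 2 m - 1) = H m (c - 1); need extra 0 term if c ≥ 1
      unfold G
      rw [← heq]
      rcases Nat.eq_zero_or_pos c with h0 | h0
      · rw [h0]
      · -- clog 2 m = c, clog 2 (m+1) = c+1 : m = 2^c
        have hm2 : m = 2^c := by
          have hle2 : m ≤ 2^c := heq ▸ Nat.le_pow_clog (by norm_num) m
          have : 2^c < m + 1 :=
            (Nat.lt_clog_iff_pow_lt (by norm_num)).mp (by rw [hc]; omega)
          omega
        obtain ⟨c', rfl⟩ : ∃ c', c = c' + 1 := ⟨c - 1, by omega⟩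
        simp only [Nat.add_sub_cancel]
        unfold H
        rw [Finset.sum_range_succ]
        have : mterm m (c'+1) = 0 := by
          unfold mterm
          have : m % 2^(c'+1) = 0 := by rw [hm2]; exact Nat.mod_self _
          rw [this]; simp
        rw [this, add_zero]
    · -- clog 2 m = c + 1
      have heq2 : Nat.clog 2 m = c + 1 := by omega
      unfold G
      rw [heq2]
      simp
  rw [hGm, hGm1]


lemma distNearestInt_eq (x : ℝ) :
    distNearestInt x = min (Int.fract x) (1 - Int.fract x) := by
  have hbdd : BddBelow (Set.range fun z : ℤ => |x - (z : ℝ)|) := by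
    refine ⟨0, ?_⟩
    rintro _ ⟨z, rfl⟩
    positivity
  have hf0 : 0 ≤ Int.fract x := Int.fract_nonneg x
  have hf1 : Int.fract x < 1 := Int.fract_lt_one x
  apply le_antisymm
  · apply le_min
    · refine (ciInf_le hbdd ⌊x⌋).trans_eq ?_
      rw [abs_of_nonneg (by simpa using Int.fract_nonneg x)]
      rfl
    · refine (ciInf_le hbdd (⌊x⌋ + 1)).trans_eq ?_
      rw [abs_of_nonpos]
      · push_cast
        unfold Int.fract
        ring
      · push_cast
        have := Int.fract_lt_one x
        unfold Int.fract at this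
        linarith
  · apply le_ciInf
    intro z
    rcases le_or_gt (z : ℝ) (⌊x⌋ : ℝ) with hz | hz
    · refine (min_le_left _ _).trans ?_
      have h1 : x - z ≥ Int.fract x := by
        unfold Int.fract
        linarith
      calc Int.fract x ≤ x - z := h1
      _ ≤ |x - z| := le_abs_self _
    · have hz1 : (⌊x⌋ : ℝ) + 1 ≤ z := by
        have : ⌊x⌋ < z := by exact_mod_cast hz
        exact_mod_cast this
      refine (min_le_right _ _).trans ?_
      have h1 : z - x ≥ 1 - Int.fract x := by
        unfold Int.fract
        have hx : x < ⌊x⌋ + 1 := Int.lt_floor_add_one x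
        linarith
      calc 1 - Int.fract x ≤ z - x := h1
      _ ≤ |x - z| := by rw [abs_sub_comm]; exact le_abs_self _

lemma fract_nat_div_pow (n j : ℕ) :
    Int.fract ((n : ℝ) / 2^j) = ((n % 2^j : ℕ) : ℝ) / 2^j := by
  have hP : (0:ℝ) < 2^j := by positivity
  have hr : (n % 2^j : ℕ) < 2^j := Nat.mod_lt _ (Nat.pow_pos (by norm_num))
  have e : (n : ℝ) = ((n / 2^j : ℕ) : ℝ) * 2^j + ((n % 2^j : ℕ) : ℝ) := by
    exact_mod_cast (Nat.div_add_mod' n (2^j)).symm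
  have hsplit : (n : ℝ) / 2^j = ((n / 2^j : ℕ) : ℤ) + ((n % 2^j : ℕ) : ℝ) / 2^j := by
    rw [e, add_div, mul_div_cancel_right₀ _ (ne_of_gt hP)]
    norm_cast
  rw [hsplit, Int.fract_intCast_add, Int.fract_eq_self.mpr]
  constructor
  · positivity
  · rw [div_lt_one hP]
    exact_mod_cast hr

lemma dni_term (n j : ℕ) :
    distNearestInt ((n : ℝ) / 2^j) * 2^j = (mterm n j : ℝ) := by
  have hP : (0:ℝ) < 2^j := by positivity
  have hr : (n % 2^j : ℕ) < 2^j := Nat.mod_lt _ (Nat.pow_pos (by norm_num))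
  rw [distNearestInt_eq, fract_nat_div_pow, min_mul_of_nonneg _ _ (le_of_lt hP)]
  unfold mterm
  rw [Nat.cast_min, Nat.cast_sub (le_of_lt hr)]
  have e1 : ((n % 2^j : ℕ) : ℝ) / 2^j * 2^j = ((n % 2^j : ℕ) : ℝ) :=
    div_mul_cancel₀ _ (ne_of_gt hP)
  have e2 : (1 - ((n % 2^j : ℕ) : ℝ) / 2^j) * 2^j = ((2^j : ℕ) : ℝ) - ((n % 2^j : ℕ) : ℝ) := by
    push_cast
    field_simp
  rw [e1, e2]

lemma F_rec (n : ℕ) (h : 2 ≤ n) : F n = F ((n+1)/2) + F (n/2) + n % 2 := by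
  rw [F, if_neg (by omega)]

lemma F_le_colless (T : FBT) : F T.leaves ≤ T.colless := by
  induction T with
  | leaf => simp [FBT.leaves, FBT.colless, F_one]
  | node a b iha ihb =>
    have h := F_subadd (a.leaves + b.leaves) a.leaves b.leaves rfl
    simp only [FBT.leaves, FBT.colless]
    omega

lemma exists_tree (n : ℕ) (hn : 1 ≤ n) : ∃ T : FBT, T.leaves = n ∧ T.colless = F n := by
  induction n using Nat.strong_induction_on with
  | _ n ih =>
    rcases eq_or_lt_of_le hn with h1 | h2
    · exact ⟨FBT.leaf, by simp [FBT.leaves, ← h1], by simp [FBT.colless, ← h1, F_one]⟩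
    · obtain ⟨A, hA1, hA2⟩ := ih ((n+1)/2) (by omega) (by omega)
      obtain ⟨B, hB1, hB2⟩ := ih (n/2) (by omega) (by omega)
      refine ⟨FBT.node A B, ?_, ?_⟩
      · simp only [FBT.leaves]; omega
      · simp only [FBT.colless, hA1, hB1, hA2, hB2, F_rec n (by omega)]
        simp only [Nat.dist]
        omega

lemma minColless_eq_F (n : ℕ) (hn : 1 ≤ n) : minColless n = F n := by
  obtain ⟨T, hT1, hT2⟩ := exists_tree n hn
  apply le_antisymm
  · exact Nat.sInf_le ⟨T, hT1, hT2⟩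
  · apply le_csInf
    · exact ⟨F n, T, hT1, hT2⟩
    rintro m ⟨S, hS1, rfl⟩
    rw [← hS1]
    exact F_le_colless S


lemma F_eq_G (n : ℕ) (hn : 1 ≤ n) : F n = G n := by
  induction n using Nat.strong_induction_on with
  | _ n ih =>
    rcases eq_or_lt_of_le hn with h1 | h2
    · rw [← h1, F_one, G_one]
    · rcases Nat.even_or_odd n with ⟨m, hm⟩ | ⟨m, hm⟩
      · have hm1 : 1 ≤ m := by omega
        rw [show n = 2*m by omega, F_even, G_even m hm1, ih m (by omega) hm1]
      · have hm1 : 1 ≤ m := by omega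
        rw [show n = 2*m+1 by omega, F_odd m hm1, G_odd m hm1,
            ih m (by omega) hm1, ih (m+1) (by omega) (by omega)]
        omega

theorem minColless_explicit (n : ℕ) (hn : 1 ≤ n) (k : ℕ) (hk : k = Nat.clog 2 n) :
    (minColless n : ℝ) =
      ∑ i ∈ Finset.range (k - 1),
        distNearestInt ((2 : ℝ) ^ ((i : ℤ) - (k : ℤ) + 1) * (n : ℝ)) /
          (2 : ℝ) ^ ((i : ℤ) - (k : ℤ) + 1) := by
  subst hk
  rw [minColless_eq_F n hn, F_eq_G n hn]
  unfold G H
  rw [← Finset.sum_range_reflect, Nat.cast_sum]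
  apply Finset.sum_congr rfl
  intro i hi
  have hik : i < Nat.clog 2 n - 1 := Finset.mem_range.mp hi
  set j := Nat.clog 2 n - 1 - 1 - i + 1 with hj
  have he : (i : ℤ) - (Nat.clog 2 n : ℤ) + 1 = -((j : ℕ) : ℤ) := by omega
  rw [he]
  have hzp : (2:ℝ) ^ (-((j:ℕ):ℤ)) = ((2:ℝ)^(j:ℕ))⁻¹ := by
    rw [zpow_neg]
    norm_cast
  rw [hzp, inv_mul_eq_div, div_inv_eq_mul]
  exact (dni_term n j).symm
end

section
/- Let n be odd with 2^{k−1} < n < 2^k where k = ⌈log₂ n⌉, and assume n − 1 > 2^{k−1}. Define f_i(m) = s(2^{i−k+1}·m) / 2^{i−k+1} for real arguments m (with k fixed as above). Then for every integer i with 0 ≤ i ≤ k − 3, one has f_i(n+1) + f_i(n−1) = 2·f_i(n). -/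
lemma distNearestInt_eq_s4 (y : ℝ) (c : ℤ) (h : |y - (c : ℝ)| ≤ 1 / 2) :
    distNearestInt y = |y - (c : ℝ)| := by
  apply le_antisymm
  · exact ciInf_le ⟨0, by rintro _ ⟨z, rfl⟩; positivity⟩ c
  · apply le_ciInf
    intro z
    rcases eq_or_ne z c with rfl | hz
    · exact le_rfl
    · have h0 : (1 : ℤ) ≤ |z - c| := Int.one_le_abs (sub_ne_zero.2 hz)
      have h1 : (1 : ℝ) ≤ |(z : ℝ) - (c : ℝ)| := by exact_mod_cast h0
      have h2 : |(z : ℝ) - (c : ℝ)| ≤ |(z : ℝ) - y| + |y - (c : ℝ)| := abs_sub_le _ _ _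
      have h3 : |y - (z : ℝ)| = |(z : ℝ) - y| := abs_sub_comm _ _
      linarith

lemma distNearestInt_neg (x : ℝ) : distNearestInt (-x) = distNearestInt x := by
  unfold distNearestInt
  apply Equiv.iInf_congr (Equiv.neg ℤ)
  intro z
  simp only [Equiv.neg_apply, Int.cast_neg]
  rw [← abs_neg]
  ring_nf

lemma helper (δ : ℝ) (hδ : 0 < δ) (c : ℤ) (a : ℝ) (ha0 : δ ≤ a) (ha : a + δ ≤ 1 / 2) :
    distNearestInt ((c : ℝ) + a + δ) + distNearestInt ((c : ℝ) + a - δ)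
      = 2 * distNearestInt ((c : ℝ) + a) := by
  have e1 : distNearestInt ((c : ℝ) + a + δ) = a + δ := by
    rw [distNearestInt_eq_s4 _ c (by rw [abs_of_nonneg] <;> [skip; linarith] <;> linarith),
      abs_of_nonneg (by linarith)]
    ring
  have e2 : distNearestInt ((c : ℝ) + a - δ) = a - δ := by
    rw [distNearestInt_eq_s4 _ c (by rw [abs_of_nonneg] <;> [skip; linarith] <;> linarith),
      abs_of_nonneg (by linarith)]
    ring
  have e3 : distNearestInt ((c : ℝ) + a) = a := by
    rw [distNearestInt_eq_s4 _ c (by rw [abs_of_nonneg] <;> [skip; linarith] <;> linarith),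
      abs_of_nonneg (by linarith)]
    ring
  rw [e1, e2, e3]; ring

theorem fi_add_fi_eq_two_fi (n : ℕ) (hodd : Odd n) (k : ℕ) (hk : k = Nat.clog 2 n)
    (h1 : 2 ^ (k - 1) < n) (h2 : n < 2 ^ k) (h3 : 2 ^ (k - 1) < n - 1)
    (i : ℕ) (hi : (i : ℤ) ≤ (k : ℤ) - 3) :
    distNearestInt ((2 : ℝ) ^ ((i : ℤ) - (k : ℤ) + 1) * ((n : ℝ) + 1)) /
        (2 : ℝ) ^ ((i : ℤ) - (k : ℤ) + 1) +
      distNearestInt ((2 : ℝ) ^ ((i : ℤ) - (k : ℤ) + 1) * ((n : ℝ) - 1)) /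
        (2 : ℝ) ^ ((i : ℤ) - (k : ℤ) + 1) =
    2 * (distNearestInt ((2 : ℝ) ^ ((i : ℤ) - (k : ℤ) + 1) * (n : ℝ)) /
        (2 : ℝ) ^ ((i : ℤ) - (k : ℤ) + 1)) := by
  set t : ℕ := k - i - 1 with ht
  have hki : i + 3 ≤ k := by omega
  have ht2 : 2 ≤ t := by omega
  set N : ℕ := 2 ^ t with hN
  have hN4 : 4 ≤ N := by
    calc 4 = 2 ^ 2 := rfl
    _ ≤ 2 ^ t := Nat.pow_le_pow_right (by norm_num) ht2
  have hNeven : 2 ∣ N := dvd_pow_self 2 (by omega : t ≠ 0)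
  set q : ℕ := n / N with hq
  set r : ℕ := n % N with hr
  have hnqr : n = N * q + r := (Nat.div_add_mod n N).symm.trans (by ring)
  have hrN : r < N := Nat.mod_lt _ (by omega)
  have hrodd : Odd r := by
    have hmm : n % N % 2 = n % 2 := Nat.mod_mod_of_dvd n hNeven
    rw [Nat.odd_iff] at hodd ⊢
    rw [hr, hmm, hodd]
  have hr1 : 1 ≤ r := by rcases hrodd with ⟨u, hu⟩; omega
  have hrhalf : 2 * r ≠ N := by
    intro hc
    have hNt : N = 2 * (2 * 2 ^ (t - 2)) := by
      rw [hN, ← pow_succ', ← pow_succ']; congr 1; omega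
    rcases hrodd with ⟨u, hu⟩
    omega
  have hepow : (2 : ℝ) ^ ((i : ℤ) - (k : ℤ) + 1) = ((N : ℝ))⁻¹ := by
    have he : (i : ℤ) - (k : ℤ) + 1 = -(t : ℤ) := by omega
    rw [he, zpow_neg, zpow_natCast]
    norm_cast
  set δ : ℝ := ((N : ℝ))⁻¹ with hδ
  have hNpos : (0 : ℝ) < N := by positivity
  have hδpos : 0 < δ := by positivity
  have hδN : (N : ℝ) * δ = 1 := mul_inv_cancel₀ (ne_of_gt hNpos)
  have hnR : (n : ℝ) = (N : ℝ) * (q : ℝ) + (r : ℝ) := by exact_mod_cast congrArg (Nat.cast (R := ℝ)) hnqr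
  rw [hepow]
  have hx : δ * (n : ℝ) = ((q : ℤ) : ℝ) + (r : ℝ) * δ := by
    rw [hnR]
    simp only [Int.cast_natCast]
    linear_combination (q : ℝ) * hδN
  have hxp : δ * ((n : ℝ) + 1) = ((q : ℤ) : ℝ) + (r : ℝ) * δ + δ := by
    rw [mul_add, hx]; ring
  have hxm : δ * ((n : ℝ) - 1) = ((q : ℤ) : ℝ) + (r : ℝ) * δ - δ := by
    rw [mul_sub, hx]; ring
  rcases lt_or_gt_of_ne hrhalf with hlt | hgt
  · have h2r : 2 * r + 2 ≤ N := by
      rcases hrodd with ⟨u, hu⟩; rcases hNeven with ⟨m, hm⟩; omega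
    have h2r' : 2 * (r : ℝ) + 2 ≤ (N : ℝ) := by exact_mod_cast h2r
    have hr1' : (1 : ℝ) ≤ (r : ℝ) := by exact_mod_cast hr1
    have key := helper δ hδpos (q : ℤ) ((r : ℝ) * δ)
      (by nlinarith)
      (by nlinarith [mul_le_mul_of_nonneg_right h2r' hδpos.le, hδN])
    rw [hxp, hxm, hx]
    rw [← add_div, key]
    ring
  · have h2r : N + 2 ≤ 2 * r := by
      rcases hrodd with ⟨u, hu⟩; rcases hNeven with ⟨m, hm⟩; omega
    have h2r' : (N : ℝ) + 2 ≤ 2 * (r : ℝ) := by exact_mod_cast h2r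
    have hrN' : (r : ℝ) + 1 ≤ (N : ℝ) := by exact_mod_cast hrN
    have key := helper δ hδpos (-(q : ℤ) - 1) (((N : ℝ) - r) * δ)
      (by nlinarith)
      (by nlinarith [mul_le_mul_of_nonneg_right h2r' hδpos.le, hδN])
    have e1 : ((-(q : ℤ) - 1 : ℤ) : ℝ) + ((N : ℝ) - r) * δ + δ = -(δ * ((n : ℝ) - 1)) := by
      rw [hxm]; push_cast; linear_combination hδN
    have e2 : ((-(q : ℤ) - 1 : ℤ) : ℝ) + ((N : ℝ) - r) * δ - δ = -(δ * ((n : ℝ) + 1)) := by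
      rw [hxp]; push_cast; linear_combination hδN
    have e3 : ((-(q : ℤ) - 1 : ℤ) : ℝ) + ((N : ℝ) - r) * δ = -(δ * (n : ℝ)) := by
      rw [hx]; push_cast; linear_combination hδN
    rw [e1, e2, e3, distNearestInt_neg, distNearestInt_neg, distNearestInt_neg] at key
    field_simp
    linarith [key]
end

section
/- For every natural number k ≥ 0, the minimal Colless index satisfies c(2^k + 1) = k. -/
namespace MinCollessAux

/-- `g n = ⌊log₂ (odd part of n)⌋`, a lower bound for the Colless index. -/
def g (n : ℕ) : ℕ :=
  if h : n = 0 then 0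
  else if 2 ∣ n then g (n / 2) else Nat.log 2 n
termination_by n
decreasing_by exact Nat.div_lt_self (Nat.pos_of_ne_zero h) one_lt_two

lemma g_odd {n : ℕ} (h : ¬ 2 ∣ n) : g n = Nat.log 2 n := by
  have hn : n ≠ 0 := by rintro rfl; exact h ⟨0, rfl⟩
  rw [g]; simp [hn, h]

lemma g_two_mul (n : ℕ) : g (2 * n) = g n := by
  rcases Nat.eq_zero_or_pos n with rfl | hn
  · rfl
  · rw [g]
    have h2 : (2 : ℕ) * n ≠ 0 := by positivity
    simp [h2, Nat.mul_div_cancel_left n (by norm_num : 0 < 2)]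

lemma g_le_log (n : ℕ) : g n ≤ Nat.log 2 n := by
  induction n using Nat.strong_induction_on with
  | _ n ih =>
    rcases eq_or_ne n 0 with rfl | hn
    · simp [g]
    by_cases h2 : 2 ∣ n
    · obtain ⟨m, rfl⟩ := h2
      rw [g_two_mul]
      have hm : m ≠ 0 := by rintro rfl; simp at hn
      calc g m ≤ Nat.log 2 m := ih m (by omega)
        _ ≤ Nat.log 2 (2 * m) := Nat.log_mono_right (by omega)
    · rw [g_odd h2]

lemma g_pow_mul (v m : ℕ) : g (2 ^ v * m) = g m := by
  induction v with
  | zero => simp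
  | succ v ih => rw [pow_succ, mul_comm (2 ^ v) 2, mul_assoc, g_two_mul, ih]

lemma log_pow_mul (v : ℕ) {m : ℕ} (hm : m ≠ 0) :
    Nat.log 2 (2 ^ v * m) = v + Nat.log 2 m := by
  induction v with
  | zero => simp
  | succ v ih =>
    rw [pow_succ, mul_comm (2 ^ v) 2, mul_assoc, mul_comm 2 (2 ^ v * m),
      Nat.log_mul_base one_lt_two (by positivity), ih]
    omega

/-- Key auxiliary inequality: `2^(t+1) + v ≤ t + 2^v + 1` for `v ≥ t + 1`. -/
lemma pow_aux {t v : ℕ} (h : t + 1 ≤ v) : 2 ^ (t + 1) + v ≤ t + 2 ^ v + 1 := by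
  induction v, h using Nat.le_induction with
  | base => omega
  | succ v hv ih =>
    have h1 : 2 ^ v + 1 ≤ 2 ^ (v + 1) := by
      have : (1:ℕ) ≤ 2 ^ v := Nat.one_le_two_pow
      rw [pow_succ]; omega
    omega

/-- Superadditivity-type inequality for `g`. -/
lemma g_superadd : ∀ n a b : ℕ, a + b = n → 1 ≤ a → a ≤ b →
    g n ≤ g a + g b + (b - a) := by
  intro n
  induction n using Nat.strong_induction_on with
  | _ n ih =>
    intro a b hab ha hle
    rcases eq_or_ne a b with rfl | hne
    · -- a = b
      obtain rfl : 2 * a = n := by omega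
      rw [g_two_mul]; omega
    have hlt : a < b := lt_of_le_of_ne hle hne
    have hb1 : 1 ≤ b := by omega
    rcases Nat.even_or_odd a with hea | hoa
    · rcases Nat.even_or_odd b with heb | hob
      · -- both even
        obtain ⟨a', rfl⟩ : ∃ a', a = 2 * a' := by
          obtain ⟨c, hc⟩ := hea; exact ⟨c, by omega⟩
        obtain ⟨b', rfl⟩ : ∃ b', b = 2 * b' := by
          obtain ⟨c, hc⟩ := heb; exact ⟨c, by omega⟩
        obtain rfl : 2 * (a' + b') = n := by omega
        rw [g_two_mul]
        have := ih (a' + b') (by omega) a' b' rfl (by omega) (by omega)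
        rw [g_two_mul, g_two_mul]
        omega
      · -- a even, b odd : n odd
        have hno : ¬ 2 ∣ n := by
          rcases hob with ⟨c, hc⟩; rcases hea with ⟨d, hd⟩; omega
        have hbo : ¬ 2 ∣ b := by rcases hob with ⟨c, hc⟩; omega
        rw [g_odd hno]
        have h1 : Nat.log 2 n ≤ Nat.log 2 (b * 2) := Nat.log_mono_right (by omega)
        rw [Nat.log_mul_base one_lt_two (by omega)] at h1
        have hgb : g b = Nat.log 2 b := g_odd hbo
        omega
    · rcases Nat.even_or_odd b with heb | hob
      · -- a odd, b even : the hard case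
        have hno : ¬ 2 ∣ n := by
          rcases hoa with ⟨c, hc⟩; rcases heb with ⟨d, hd⟩; omega
        rw [g_odd hno]
        obtain ⟨v, m, hmodd, rfl⟩ := Nat.exists_eq_two_pow_mul_odd (show b ≠ 0 by omega)
        have hm1 : 1 ≤ m := hmodd.pos
        have hgb : g (2 ^ v * m) = Nat.log 2 m := by
          rw [g_pow_mul, g_odd (by rcases hmodd with ⟨c, hc⟩; omega)]
        have hlogb : Nat.log 2 (2 ^ v * m) = v + Nat.log 2 m := log_pow_mul v (by omega)
        have hv1 : 1 ≤ v := by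
          by_contra hv0
          interval_cases v
          · rcases heb with ⟨c, hc⟩; rcases hmodd with ⟨d, hd⟩; omega
        set b := 2 ^ v * m with hbdef
        have hln : Nat.log 2 n ≤ Nat.log 2 b + 1 := by
          have h1 : Nat.log 2 n ≤ Nat.log 2 (b * 2) := Nat.log_mono_right (by omega)
          rwa [Nat.log_mul_base one_lt_two (by omega)] at h1
        set t := Nat.log 2 a with htdef
        have hga : g a = t := g_odd (by rcases hoa with ⟨c, hc⟩; omega)
        rw [hga, hgb]
        by_cases hvt : v ≤ t
        · -- v ≤ log a
          omega
        push_neg at hvt  -- t < v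
        by_cases hd : v + 1 ≤ b - a
        · omega
        push_neg at hd   -- b - a ≤ v
        -- show b = 2 ^ v
        have hapow : a < 2 ^ (t + 1) := Nat.lt_pow_succ_log_self one_lt_two a
        have hpowle : 2 ^ (t + 1) ≤ 2 ^ v := Nat.pow_le_pow_right (by norm_num) hvt
        have hvpow : v < 2 ^ v := Nat.lt_two_pow_self
        have hble : b < 2 ^ v + 2 ^ v := by omega
        have hm2 : m < 2 := by
          by_contra hm2
          push_neg at hm2
          have : 2 ^ v * 2 ≤ 2 ^ v * m := Nat.mul_le_mul_left _ hm2
          omega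
        obtain rfl : m = 1 := by omega
        rw [Nat.mul_one] at *
        -- now b = 2 ^ v, n = a + 2 ^ v < 2 ^ (v+1)
        have hnlt : n < 2 ^ (v + 1) := by rw [pow_succ]; omega
        have hlogn : Nat.log 2 n < v + 1 :=
          Nat.log_lt_of_lt_pow (by omega) hnlt
        have hkey : 2 ^ (t + 1) + v ≤ t + 2 ^ v + 1 := pow_aux hvt
        have hl1 : Nat.log 2 1 = 0 := Nat.log_one_right 2
        omega
      · -- both odd
        obtain ⟨a', rfl⟩ : ∃ a', a = 2 * a' + 1 := hoa
        obtain ⟨b', rfl⟩ : ∃ b', b = 2 * b' + 1 := hob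
        have ha'b' : a' < b' := by omega
        obtain rfl : 2 * (a' + b' + 1) = n := by omega
        rw [g_two_mul]
        have hih := ih (a' + b' + 1) (by omega) (a' + 1) b' (by omega) (by omega)
          (by omega)
        have h1 : g (a' + 1) ≤ Nat.log 2 (2 * a' + 1) :=
          (g_le_log _).trans (Nat.log_mono_right (by omega))
        have h2 : g b' ≤ Nat.log 2 (2 * b' + 1) :=
          (g_le_log _).trans (Nat.log_mono_right (by omega))
        have hga : g (2 * a' + 1) = Nat.log 2 (2 * a' + 1) := g_odd (by omega)
        have hgb : g (2 * b' + 1) = Nat.log 2 (2 * b' + 1) := g_odd (by omega)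
        omega

open FBT

lemma one_le_leaves (T : FBT) : 1 ≤ T.leaves := by
  induction T with
  | leaf => exact le_refl 1
  | node a b iha ihb => simp only [leaves]; omega

/-- The fundamental lower bound: `g (leaves T) ≤ colless T`. -/
lemma g_le_colless (T : FBT) : g T.leaves ≤ T.colless := by
  induction T with
  | leaf => simp [leaves, colless, g]
  | node a b iha ihb =>
    simp only [leaves, colless]
    have ha := one_le_leaves a
    have hb := one_le_leaves b
    rcases le_total a.leaves b.leaves with h | h
    · have := g_superadd (a.leaves + b.leaves) a.leaves b.leaves rfl ha h
      have hd : Nat.dist a.leaves b.leaves = b.leaves - a.leaves :=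
        Nat.dist_eq_sub_of_le h
      omega
    · have := g_superadd (a.leaves + b.leaves) b.leaves a.leaves (by omega) hb h
      have hd : Nat.dist a.leaves b.leaves = a.leaves - b.leaves :=
        Nat.dist_eq_sub_of_le_right h
      omega

/-- Complete binary tree with `2 ^ k` leaves. -/
def comp : ℕ → FBT
  | 0 => leaf
  | k + 1 => node (comp k) (comp k)

@[simp] lemma comp_leaves (k : ℕ) : (comp k).leaves = 2 ^ k := by
  induction k with
  | zero => rfl
  | succ k ih => simp [comp, leaves, ih, pow_succ]; ring

@[simp] lemma comp_colless (k : ℕ) : (comp k).colless = 0 := by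
  induction k with
  | zero => rfl
  | succ k ih => simp [comp, colless, ih]

/-- Witness tree with `2 ^ k + 1` leaves and Colless index `k`. -/
def wit : ℕ → FBT
  | 0 => node leaf leaf
  | k + 1 => node (wit k) (comp k)

@[simp] lemma wit_leaves (k : ℕ) : (wit k).leaves = 2 ^ k + 1 := by
  induction k with
  | zero => rfl
  | succ k ih => simp [wit, leaves, ih, pow_succ]; ring

@[simp] lemma wit_colless (k : ℕ) : (wit k).colless = k := by
  induction k with
  | zero => rfl
  | succ k ih =>
    simp only [wit, colless, ih, comp_colless, wit_leaves, comp_leaves]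
    rw [Nat.dist_eq_sub_of_le_right (by omega)]
    omega

lemma g_pow_add_one (k : ℕ) (hk : 1 ≤ k) : g (2 ^ k + 1) = k := by
  have hodd : ¬ 2 ∣ (2 ^ k + 1) := by
    intro h
    have : 2 ∣ 2 ^ k := dvd_pow_self 2 (by omega)
    omega
  rw [g_odd hodd]
  have h1 : 2 ^ k ≤ 2 ^ k + 1 := by omega
  have h2 : 2 ^ k + 1 < 2 ^ (k + 1) := by
    rw [pow_succ]
    have : 2 ≤ 2 ^ k := by
      calc 2 = 2 ^ 1 := rfl
        _ ≤ 2 ^ k := Nat.pow_le_pow_right (by norm_num) hk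
    omega
  have hl : k ≤ Nat.log 2 (2 ^ k + 1) := Nat.le_log_of_pow_le one_lt_two h1
  have hu : Nat.log 2 (2 ^ k + 1) < k + 1 := Nat.log_lt_of_lt_pow (by omega) h2
  omega

end MinCollessAux

open MinCollessAux in
theorem minColless_pow_two_add_one (k : ℕ) : minColless (2 ^ k + 1) = k := by
  unfold minColless
  apply le_antisymm
  · exact Nat.sInf_le ⟨wit k, wit_leaves k, wit_colless k⟩
  · refine le_csInf ?_ ?_
    · exact ⟨k, wit k, wit_leaves k, wit_colless k⟩
    rintro m ⟨T, hT, rfl⟩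
    rcases Nat.eq_zero_or_pos k with rfl | hk
    · exact Nat.zero_le _
    · have := g_le_colless T
      rw [hT, g_pow_add_one k hk] at this
      exact this
end

section
/- For every natural number k ≥ 1, the minimal Colless index satisfies c(2^k − 1) = k − 1. -/
/-!
The binary digit sum `s` satisfies `s (p + q) + 1 ≤ s p + s q + |p - q|` for `p, q ≥ 1`: for
`p = q` because `s (2p) = s p ≥ 1`, otherwise by subadditivity of `s` (Legendre's formula, since
`p! q!` divides `(p + q)!`). Summing over internal nodes gives `s (leaves T) ≤ C(T) + 1`, and
`s (2^k - 1) = k`. A chain of perfect trees of heights `k - 1, …, 1` ending in a leaf attains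
the bound.
-/

namespace Nat

theorem digits_pow_sub_one {b : ℕ} (hb : 1 < b) (k : ℕ) :
    b.digits (b ^ k - 1) = List.replicate k (b - 1) := by
  induction k with
  | zero => simp
  | succ k ih =>
    have hpow : 1 ≤ b ^ k := Nat.one_le_pow _ _ (by omega)
    have hsplit : b ^ (k + 1) - 1 = (b - 1) + b * (b ^ k - 1) := by
      rw [pow_succ', Nat.mul_sub, mul_one]
      have : b ≤ b * b ^ k := Nat.le_mul_of_pos_right b hpow
      omega
    rw [hsplit, digits_add b hb _ _ (by omega) (Or.inl (by omega)), ih, List.replicate_succ]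

theorem digits_sum_base_mul {b : ℕ} (hb : 1 < b) (n : ℕ) :
    (b.digits (b * n)).sum = (b.digits n).sum := by
  rcases Nat.eq_zero_or_pos n with rfl | hn
  · simp
  · simp [digits_base_mul hb hn]

theorem digits_sum_pos (b : ℕ) {n : ℕ} (hn : n ≠ 0) : 0 < (b.digits n).sum :=
  List.sum_pos_iff_exists_pos_nat.mpr
    ⟨_, List.getLast_mem (digits_ne_nil_iff_ne_zero.mpr hn),
      Nat.pos_of_ne_zero (getLast_digit_ne_zero b hn)⟩

theorem digits_sum_add_le (p : ℕ) [Fact p.Prime] (m n : ℕ) :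
    (p.digits (m + n)).sum ≤ (p.digits m).sum + (p.digits n).sum := by
  have hval : padicValNat p (m ! * n !) ≤ padicValNat p (m + n)! :=
    (padicValNat_dvd_iff_le (factorial_ne_zero _)).mp
      (pow_padicValNat_dvd.trans (factorial_mul_factorial_dvd_factorial_add m n))
  rw [padicValNat.mul (factorial_ne_zero _) (factorial_ne_zero _)] at hval
  have hlegendre := Nat.mul_le_mul_left (p - 1) hval
  rw [mul_add, sub_one_mul_padicValNat_factorial, sub_one_mul_padicValNat_factorial,
    sub_one_mul_padicValNat_factorial] at hlegendre
  have := digit_sum_le p m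
  have := digit_sum_le p n
  have := digit_sum_le p (m + n)
  omega

theorem digits_two_sum_add_lt {m n : ℕ} (hm : m ≠ 0) (hn : n ≠ 0) :
    (digits 2 (m + n)).sum < (digits 2 m).sum + (digits 2 n).sum + m.dist n := by
  rcases eq_or_ne m n with rfl | hne
  · rw [← two_mul, digits_sum_base_mul one_lt_two, dist_self]
    have := digits_sum_pos 2 hm
    omega
  · have := digits_sum_add_le 2 m n
    have := dist_pos_of_ne hne
    omega

end Nat

namespace FBT

def perfect : ℕ → FBT
  | 0 => leaf
  | k + 1 => node (perfect k) (perfect k)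

def perfectChain : ℕ → FBT
  | 0 => leaf
  | k + 1 => node (perfect (k + 1)) (perfectChain k)

theorem leaves_perfect (k : ℕ) : (perfect k).leaves = 2 ^ k := by
  induction k with
  | zero => rfl
  | succ k ih => rw [perfect, leaves, ih, pow_succ, mul_two]

theorem colless_perfect (k : ℕ) : (perfect k).colless = 0 := by
  induction k with
  | zero => rfl
  | succ k ih => simp [perfect, colless, ih]

theorem leaves_perfectChain (k : ℕ) : (perfectChain k).leaves = 2 ^ (k + 1) - 1 := by
  induction k with
  | zero => rfl
  | succ k ih =>
    have := Nat.one_le_two_pow (n := k + 1)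
    rw [perfectChain, leaves, ih, leaves_perfect, pow_succ 2 (k + 1)]
    omega

theorem colless_perfectChain (k : ℕ) : (perfectChain k).colless = k := by
  induction k with
  | zero => rfl
  | succ k ih =>
    have := Nat.one_le_two_pow (n := k + 1)
    rw [perfectChain, colless, ih, colless_perfect, leaves_perfect, leaves_perfectChain,
      Nat.dist_eq_sub_of_le_right (Nat.sub_le _ _)]
    omega

theorem leaves_ne_zero (T : FBT) : T.leaves ≠ 0 := by
  induction T with
  | leaf => simp [leaves]
  | node a b iha _ => simp [leaves, iha]

theorem digits_two_sum_leaves_le (T : FBT) : (Nat.digits 2 T.leaves).sum ≤ T.colless + 1 := by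
  induction T with
  | leaf => simp [leaves, colless]
  | node a b iha ihb =>
    have := Nat.digits_two_sum_add_lt a.leaves_ne_zero b.leaves_ne_zero
    simp only [leaves, colless]
    omega

end FBT

theorem minColless_pow_two_sub_one (k : ℕ) (hk : 1 ≤ k) :
    minColless (2 ^ k - 1) = k - 1 := by
  have hchain : k - 1 ∈ {m : ℕ | ∃ T : FBT, T.leaves = 2 ^ k - 1 ∧ T.colless = m} :=
    ⟨FBT.perfectChain (k - 1), by rw [FBT.leaves_perfectChain, Nat.sub_add_cancel hk],
      FBT.colless_perfectChain (k - 1)⟩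
  refine le_antisymm (Nat.sInf_le hchain) (le_csInf ⟨k - 1, hchain⟩ ?_)
  rintro m ⟨T, hleaves, rfl⟩
  have := T.digits_two_sum_leaves_le
  rw [hleaves, Nat.digits_pow_sub_one one_lt_two, List.sum_replicate, smul_eq_mul] at this
  omega
end

section
/- Every maximally balanced full binary tree with n leaves has minimal Colless index: if T is maximally balanced and has n leaves, then C(T) = c(n). -/
/-- A full binary tree is maximally balanced if every internal node is balanced,
i.e. the numbers of leaves of its two maximal pending subtrees differ by at most 1. -/
inductive MaxBalanced : FBT → Prop
  | leaf : MaxBalanced FBT.leaf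
  | node {a b : FBT} : MaxBalanced a → MaxBalanced b →
      Nat.dist a.leaves b.leaves ≤ 1 → MaxBalanced (FBT.node a b)

/-!
The Colless index of a maximally balanced tree with `n` leaves is `f n`, where `f 1 = 0` and
`f n = f ⌊n/2⌋ + f ⌈n/2⌉ + (n mod 2)`. By induction on trees, `f (leaves T) ≤ C T` for every tree
once `f` satisfies the split inequality `f (a + b) ≤ f a + f b + |a - b|`. That inequality is
proved by strong induction on `a + b`: the halves of `a + b` are sums of halves of `a` and `b`,
and in each parity case the split inequalities for these halves, summed, give the one for
`a + b`, the distance terms combining by the triangle inequality.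
-/

def balancedColless (n : ℕ) : ℕ :=
  if n ≤ 1 then 0
  else balancedColless (n / 2) + balancedColless ((n + 1) / 2) + n % 2
decreasing_by all_goals omega

@[simp] lemma balancedColless_zero : balancedColless 0 = 0 := by
  rw [balancedColless]; simp

@[simp] lemma balancedColless_one : balancedColless 1 = 0 := by
  rw [balancedColless]; simp

lemma balancedColless_two_mul (n : ℕ) : balancedColless (2 * n) = 2 * balancedColless n := by
  rcases Nat.eq_zero_or_pos n with rfl | hn
  · simp
  rw [balancedColless, if_neg (by omega), show 2 * n / 2 = n by omega,
    show (2 * n + 1) / 2 = n by omega, Nat.mul_mod_right]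
  ring

lemma balancedColless_two_mul_add_one {n : ℕ} (hn : n ≠ 0) :
    balancedColless (2 * n + 1) = balancedColless n + balancedColless (n + 1) + 1 := by
  rw [balancedColless, if_neg (by omega), show (2 * n + 1) / 2 = n by omega,
    show (2 * n + 1 + 1) / 2 = n + 1 by omega, Nat.mul_add_mod]

-- The split `n + 1` of `balancedColless_add_le`, where halving fails since `1` has no two
-- nonzero halves.
lemma balancedColless_succ_add_one_le {n : ℕ} (hn : n ≠ 0) :
    balancedColless (n + 1) + 1 ≤ balancedColless n + n := by
  induction n using Nat.strong_induction_on with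
  | _ n ih =>
  obtain ⟨m, rfl | rfl⟩ := Nat.even_or_odd' n
  · have hm : m ≠ 0 := by omega
    have := ih m (by omega) hm
    rw [balancedColless_two_mul_add_one hm, balancedColless_two_mul]
    omega
  · rcases eq_or_ne m 0 with rfl | hm
    · simp [balancedColless_two_mul 1]
    have := ih m (by omega) hm
    rw [show 2 * m + 1 + 1 = 2 * (m + 1) by ring, balancedColless_two_mul,
      balancedColless_two_mul_add_one hm]
    omega

lemma balancedColless_add_le_even_even {p q : ℕ}
    (h : balancedColless (p + q) ≤ balancedColless p + balancedColless q + Nat.dist p q) :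
    balancedColless (2 * p + 2 * q) ≤
      balancedColless (2 * p) + balancedColless (2 * q) + Nat.dist (2 * p) (2 * q) := by
  rw [← mul_add, balancedColless_two_mul, balancedColless_two_mul, balancedColless_two_mul]
  simp only [Nat.dist] at *
  omega

lemma balancedColless_add_le_even_odd {p q : ℕ} (hq : q ≠ 0)
    (h₁ : balancedColless (p + q) ≤ balancedColless p + balancedColless q + Nat.dist p q)
    (h₂ : balancedColless (p + (q + 1)) ≤
      balancedColless p + balancedColless (q + 1) + Nat.dist p (q + 1)) :
    balancedColless (2 * p + (2 * q + 1)) ≤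
      balancedColless (2 * p) + balancedColless (2 * q + 1) + Nat.dist (2 * p) (2 * q + 1) := by
  rw [show 2 * p + (2 * q + 1) = 2 * (p + q) + 1 by ring,
    balancedColless_two_mul_add_one (by omega), balancedColless_two_mul,
    balancedColless_two_mul_add_one hq, add_assoc p q 1]
  simp only [Nat.dist] at *
  omega

lemma balancedColless_add_le_odd_odd {p q : ℕ} (hp : p ≠ 0) (hq : q ≠ 0)
    (h₁ : balancedColless (p + (q + 1)) ≤
      balancedColless p + balancedColless (q + 1) + Nat.dist p (q + 1))
    (h₂ : balancedColless (p + 1 + q) ≤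
      balancedColless (p + 1) + balancedColless q + Nat.dist (p + 1) q) :
    balancedColless (2 * p + 1 + (2 * q + 1)) ≤ balancedColless (2 * p + 1) +
      balancedColless (2 * q + 1) + Nat.dist (2 * p + 1) (2 * q + 1) := by
  rw [show 2 * p + 1 + (2 * q + 1) = 2 * (p + (q + 1)) by ring, balancedColless_two_mul,
    balancedColless_two_mul_add_one hp, balancedColless_two_mul_add_one hq,
    show p + 1 + q = p + (q + 1) by ring] at *
  simp only [Nat.dist] at *
  omega

theorem balancedColless_add_le (a b : ℕ) :
    balancedColless (a + b) ≤ balancedColless a + balancedColless b + Nat.dist a b := by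
  induction hn : a + b using Nat.strong_induction_on generalizing a b with
  | _ n ih =>
  subst hn
  wlog hab : a ≤ b generalizing a b
  · rw [add_comm a, add_comm (balancedColless a), Nat.dist_comm]
    exact this b a (by rwa [add_comm]) (by omega)
  have ih' (a' b' : ℕ) (h : a' + b' < a + b) := ih _ h a' b' rfl
  rcases Nat.lt_or_ge a 2 with ha | ha
  · interval_cases a
    · simp [Nat.dist]
    · have := balancedColless_succ_add_one_le (n := b) (by omega)
      rw [balancedColless_one, add_comm 1]
      simp only [Nat.dist]
      omega
  obtain ⟨p, rfl | rfl⟩ := Nat.even_or_odd' a <;>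
    obtain ⟨q, rfl | rfl⟩ := Nat.even_or_odd' b
  · exact balancedColless_add_le_even_even (ih' p q (by omega))
  · exact balancedColless_add_le_even_odd (by omega) (ih' p q (by omega))
      (ih' p (q + 1) (by omega))
  · rw [add_comm, add_comm (balancedColless _), Nat.dist_comm]
    exact balancedColless_add_le_even_odd (by omega) (ih' q p (by omega))
      (ih' q (p + 1) (by omega))
  · exact balancedColless_add_le_odd_odd (by omega) (by omega) (ih' p (q + 1) (by omega))
      (ih' (p + 1) q (by omega))

lemma balancedColless_add_of_dist_le_one {x y : ℕ} (hx : x ≠ 0) (hy : y ≠ 0)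
    (hxy : Nat.dist x y ≤ 1) :
    balancedColless (x + y) = balancedColless x + balancedColless y + Nat.dist x y := by
  rcases (show y = x ∨ y = x + 1 ∨ x = y + 1 by simp only [Nat.dist] at hxy; omega)
    with rfl | rfl | rfl
  · rw [← two_mul, balancedColless_two_mul, Nat.dist_self]
    ring
  · rw [← add_assoc, ← two_mul, balancedColless_two_mul_add_one hx]
    simp only [Nat.dist]
    omega
  · rw [add_comm, ← add_assoc, ← two_mul, balancedColless_two_mul_add_one hy]
    simp only [Nat.dist]
    omega

lemma FBT.leaves_pos (T : FBT) : 0 < T.leaves := by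
  induction T with
  | leaf => simp [FBT.leaves]
  | node a b iha ihb => simp only [FBT.leaves]; omega

lemma FBT.balancedColless_le_colless (T : FBT) : balancedColless T.leaves ≤ T.colless := by
  induction T with
  | leaf => simp [FBT.leaves, FBT.colless]
  | node a b iha ihb =>
    have := balancedColless_add_le a.leaves b.leaves
    simp only [FBT.leaves, FBT.colless]
    omega

lemma MaxBalanced.colless_eq {T : FBT} (h : MaxBalanced T) :
    T.colless = balancedColless T.leaves := by
  induction h with
  | leaf => simp [FBT.leaves, FBT.colless]
  | @node a b _ _ hab iha ihb =>
    rw [FBT.colless, FBT.leaves, iha, ihb,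
      balancedColless_add_of_dist_le_one a.leaves_pos.ne' b.leaves_pos.ne' hab]

lemma MaxBalanced.isLeast_colless {T : FBT} (h : MaxBalanced T) :
    IsLeast {m : ℕ | ∃ S : FBT, S.leaves = T.leaves ∧ S.colless = m} T.colless := by
  refine ⟨⟨T, rfl, rfl⟩, ?_⟩
  rintro _ ⟨S, hS, rfl⟩
  rw [h.colless_eq, ← hS]
  exact S.balancedColless_le_colless

theorem maxBalanced_colless_minimal (T : FBT) (h : MaxBalanced T) :
    T.colless = minColless T.leaves :=
  h.isLeast_colless.csInf_eq.symm
end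

section
/- Let n be a natural number with k = ⌈log₂ n⌉ ≥ 2 and 3·2^{k−2} ≤ n ≤ 2^k. Then the minimal Colless index satisfies c(n) = c(n − 2^{k−1}) + (2^k − n). (In particular, the leaf partition (2^{k−1}, n − 2^{k−1}) at the root, with a fully balanced tree of height k−1 as one maximal pending subtree, is realized by a tree with minimal Colless index.) -/
/-!
The maximally balanced tree `maxBalanced n`, which splits `n` leaves into `⌊n/2⌋` and `⌈n/2⌉` at
every node, has minimal Colless index. Its index `c n` obeys `c (2m) = 2 c m` and
`c (2m + 1) = c m + c (m + 1) + 1`, from which `c (a + b) ≤ c a + c b + |a - b|` follows by strong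
induction on `a + b` after splitting `a` and `b` by parity; this inequality bounds the Colless
index of every tree from below by induction on the tree. For `2 ^ j ≤ m ≤ 2 ^ (j + 1)` the halving
recursion maps `2 ^ (j + 1) + m` to `2 ^ j + ⌊m/2⌋` and `2 ^ j + ⌈m/2⌉`, with halves again in the
range one level down, so `c (2 ^ (j + 1) + m) = c m + (2 ^ (j + 1) - m)` by induction on `j`.
-/

namespace FBT

def maxBalanced (n : ℕ) : FBT :=
  if n ≤ 1 then leaf else node (maxBalanced (n / 2)) (maxBalanced ((n + 1) / 2))
termination_by n
decreasing_by all_goals omega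

theorem maxBalanced_of_le_one {n : ℕ} (hn : n ≤ 1) : maxBalanced n = leaf := by
  rw [maxBalanced, if_pos hn]

theorem maxBalanced_of_two_le {n : ℕ} (hn : 2 ≤ n) :
    maxBalanced n = node (maxBalanced (n / 2)) (maxBalanced ((n + 1) / 2)) := by
  rw [maxBalanced, if_neg (by omega)]

theorem leaves_maxBalanced {n : ℕ} (hn : 1 ≤ n) : (maxBalanced n).leaves = n := by
  induction n using Nat.strong_induction_on with
  | _ n ih =>
    rcases Nat.lt_or_ge n 2 with h | h
    · rw [maxBalanced_of_le_one (by omega), leaves]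
      omega
    · rw [maxBalanced_of_two_le h, leaves, ih _ (by omega) (by omega), ih _ (by omega) (by omega)]
      omega

theorem colless_maxBalanced_of_le_one {n : ℕ} (hn : n ≤ 1) : (maxBalanced n).colless = 0 := by
  rw [maxBalanced_of_le_one hn, colless]

theorem colless_maxBalanced_of_two_le {n : ℕ} (hn : 2 ≤ n) :
    (maxBalanced n).colless =
      (maxBalanced (n / 2)).colless + (maxBalanced ((n + 1) / 2)).colless + n % 2 := by
  rw [maxBalanced_of_two_le hn, colless, leaves_maxBalanced (by omega),
    leaves_maxBalanced (by omega), Nat.dist]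
  omega

theorem colless_maxBalanced_two_mul (m : ℕ) :
    (maxBalanced (2 * m)).colless = 2 * (maxBalanced m).colless := by
  rcases Nat.eq_zero_or_pos m with rfl | hm
  · simp [colless_maxBalanced_of_le_one]
  · rw [colless_maxBalanced_of_two_le (by omega), show 2 * m / 2 = m by omega,
      show (2 * m + 1) / 2 = m by omega]
    omega

theorem colless_maxBalanced_two_mul_add_one {m : ℕ} (hm : 1 ≤ m) :
    (maxBalanced (2 * m + 1)).colless =
      (maxBalanced m).colless + (maxBalanced (m + 1)).colless + 1 := by
  rw [colless_maxBalanced_of_two_le (by omega), show (2 * m + 1) / 2 = m by omega,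
    show (2 * m + 1 + 1) / 2 = m + 1 by omega]
  omega

theorem colless_maxBalanced_add_le (a b : ℕ) :
    (maxBalanced (a + b)).colless ≤
      (maxBalanced a).colless + (maxBalanced b).colless + Nat.dist a b := by
  induction hn : a + b using Nat.strong_induction_on generalizing a b with
  | _ n ih =>
  subst hn
  unfold Nat.dist at ih ⊢
  have c₁ : (maxBalanced 1).colless = 0 := colless_maxBalanced_of_le_one le_rfl
  rcases Nat.eq_zero_or_pos a with rfl | ha
  · simp [colless_maxBalanced_of_le_one]
  rcases Nat.eq_zero_or_pos b with rfl | hb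
  · simp [colless_maxBalanced_of_le_one]
  wlog hab : a % 2 < b % 2 ∨ a % 2 = b % 2 ∧ a ≤ b generalizing a b
  · have := this b a (by simpa only [add_comm] using ih) hb ha (by omega)
    rw [add_comm b a] at this
    omega
  rcases Nat.even_or_odd' a with ⟨p, rfl | rfl⟩ <;> rcases Nat.even_or_odd' b with ⟨q, rfl | rfl⟩
  · have := ih (p + q) (by omega) p q rfl
    rw [show 2 * p + 2 * q = 2 * (p + q) by ring, colless_maxBalanced_two_mul,
      colless_maxBalanced_two_mul, colless_maxBalanced_two_mul]
    omega
  · rw [show 2 * p + (2 * q + 1) = 2 * (p + q) + 1 by ring,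
      colless_maxBalanced_two_mul_add_one (by omega), colless_maxBalanced_two_mul]
    obtain rfl | hq := Nat.eq_zero_or_pos q
    · have := ih (p + 1) (by omega) p 1 rfl
      simp only [c₁, add_zero, mul_zero] at this ⊢
      omega
    · have := ih (p + q) (by omega) p q rfl
      have := ih (p + q + 1) (by omega) p (q + 1) (by ring)
      rw [colless_maxBalanced_two_mul_add_one hq]
      omega
  · omega
  · rw [show 2 * p + 1 + (2 * q + 1) = 2 * (p + q + 1) by ring, colless_maxBalanced_two_mul]
    obtain rfl | hq := Nat.eq_zero_or_pos q
    · obtain rfl : p = 0 := by omega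
      simp [c₁]
    rw [colless_maxBalanced_two_mul_add_one hq]
    obtain rfl | hp := Nat.eq_zero_or_pos p
    · have := ih (q + 1) (by omega) q 1 rfl
      simp only [c₁, mul_zero, zero_add] at this ⊢
      omega
    · have := ih (p + q + 1) (by omega) p (q + 1) (by ring)
      have := ih (p + q + 1) (by omega) (p + 1) q (by ring)
      rw [colless_maxBalanced_two_mul_add_one hp]
      omega

theorem colless_maxBalanced_le_colless (T : FBT) : (maxBalanced T.leaves).colless ≤ T.colless := by
  induction T with
  | leaf => simp [leaves, colless, colless_maxBalanced_of_le_one]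
  | node a b iha ihb =>
    calc (maxBalanced (a.leaves + b.leaves)).colless
        ≤ (maxBalanced a.leaves).colless + (maxBalanced b.leaves).colless
            + Nat.dist a.leaves b.leaves := colless_maxBalanced_add_le _ _
      _ ≤ (node a b).colless := by rw [colless]; omega

theorem colless_maxBalanced_two_pow_add {j m : ℕ} (h₁ : 2 ^ j ≤ m) (h₂ : m ≤ 2 ^ (j + 1)) :
    (maxBalanced (2 ^ (j + 1) + m)).colless = (maxBalanced m).colless + (2 ^ (j + 1) - m) := by
  induction j generalizing m with
  | zero =>
    have c₁ : (maxBalanced 1).colless = 0 := colless_maxBalanced_of_le_one le_rfl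
    have c₂ : (maxBalanced 2).colless = 0 := by simpa [c₁] using colless_maxBalanced_two_mul 1
    have c₃ : (maxBalanced 3).colless = 1 := by
      simpa [c₁, c₂] using colless_maxBalanced_two_mul_add_one le_rfl
    have c₄ : (maxBalanced 4).colless = 0 := by simpa [c₂] using colless_maxBalanced_two_mul 2
    norm_num at h₁ h₂ ⊢
    interval_cases m <;> simp [c₁, c₂, c₃, c₄]
  | succ j ih =>
    have hpow : 2 ^ (j + 1 + 1) = 2 * 2 ^ (j + 1) := pow_succ' 2 (j + 1)
    have hpow' : 2 ^ (j + 1) = 2 * 2 ^ j := pow_succ' 2 j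
    have hm : 2 ≤ m := le_trans (Nat.le_self_pow (by omega) 2) h₁
    rw [colless_maxBalanced_of_two_le (by omega), colless_maxBalanced_of_two_le hm,
      show (2 ^ (j + 1 + 1) + m) / 2 = 2 ^ (j + 1) + m / 2 by omega,
      show (2 ^ (j + 1 + 1) + m + 1) / 2 = 2 ^ (j + 1) + (m + 1) / 2 by omega,
      ih (m := m / 2) (by omega) (by omega), ih (m := (m + 1) / 2) (by omega) (by omega)]
    omega

end FBT

theorem minColless_eq_colless_maxBalanced {n : ℕ} (hn : 1 ≤ n) :
    minColless n = (FBT.maxBalanced n).colless := by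
  refine IsLeast.csInf_eq ⟨⟨_, FBT.leaves_maxBalanced hn, rfl⟩, ?_⟩
  rintro _ ⟨T, rfl, rfl⟩
  exact FBT.colless_maxBalanced_le_colless T

theorem minColless_second_interval_general (n : ℕ) (k : ℕ) (hk2 : 2 ≤ k)
    (h1 : 3 * 2 ^ (k - 2) ≤ n) (h2 : n ≤ 2 ^ k) :
    minColless n = minColless (n - 2 ^ (k - 1)) + (2 ^ k - n) := by
  obtain ⟨j, rfl⟩ : ∃ j, k = j + 2 := ⟨k - 2, by omega⟩
  have hpow : 2 ^ (j + 2) = 2 * 2 ^ (j + 1) := pow_succ' 2 (j + 1)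
  have hpow' : 2 ^ (j + 1) = 2 * 2 ^ j := pow_succ' 2 j
  rw [show j + 2 - 2 = j by omega] at h1
  rw [show j + 2 - 1 = j + 1 by omega]
  obtain ⟨m, rfl⟩ : ∃ m, n = 2 ^ (j + 1) + m := ⟨n - 2 ^ (j + 1), by omega⟩
  have hm : 2 ^ j ≤ m := by omega
  have hm' : 1 ≤ m := Nat.one_le_two_pow.trans hm
  rw [Nat.add_sub_cancel_left, minColless_eq_colless_maxBalanced (by omega : 1 ≤ 2 ^ (j + 1) + m),
    minColless_eq_colless_maxBalanced hm', FBT.colless_maxBalanced_two_pow_add hm (by omega)]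
  omega

theorem minColless_second_interval (n : ℕ) (k : ℕ) (hk : k = Nat.clog 2 n) (hk2 : 2 ≤ k)
    (h1 : 3 * 2 ^ (k - 2) ≤ n) (h2 : n ≤ 2 ^ k) :
    minColless n = minColless (n - 2 ^ (k - 1)) + (2 ^ k - n) :=
  minColless_second_interval_general n k hk2 h1 h2
end

section
/- Let n be a natural number with 2^{k−1} < n < 2^k where k = ⌈log₂ n⌉, and let T = node(T_a, T_b) be a full binary tree with n leaves whose maximal pending subtrees have n_a and n_b leaves with n_a ≥ n_b. If n_a − n_b > min(n − 2^{k−1}, 2^k − n), then C(T) > c(n); that is, no tree whose root partition is more extreme than the greedy-from-the-bottom partition can have minimal Colless index. -/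
namespace ColAux

def cb : ℕ → ℕ
  | 0 => 0
  | 1 => 0
  | n + 2 => cb ((n + 3) / 2) + cb ((n + 2) / 2) + (n + 2) % 2
decreasing_by all_goals omega

lemma cb_rec (n : ℕ) (hn : 2 ≤ n) : cb n = cb ((n + 1) / 2) + cb (n / 2) + n % 2 := by
  obtain ⟨m, rfl⟩ : ∃ m, n = m + 2 := ⟨n - 2, by omega⟩
  rw [cb]

lemma cb_one : cb 1 = 0 := by rw [cb]
lemma cb_two : cb 2 = 0 := by
  have := cb_rec 2 le_rfl
  norm_num [cb_one] at this
  exact this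

/-- helper: x < 2^(x-1) for x ≥ 3 -/
lemma lt_two_pow_pred : ∀ x : ℕ, 3 ≤ x → x < 2 ^ (x - 1) := by
  intro x
  induction x with
  | zero => omega
  | succ n IH =>
    intro h
    rcases Nat.lt_or_ge n 3 with h3 | h3
    · interval_cases n <;> omega
    · have := IH h3
      have h2 : 2 ^ (n - 1) + 1 ≤ 2 ^ n := by
        have : (2:ℕ) ^ n = 2 * 2 ^ (n-1) := by
          rw [← pow_succ']; congr 1; omega
        have hp : 1 ≤ (2:ℕ) ^ (n-1) := Nat.one_le_two_pow
        omega
      simpa using by omega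

/-- Δ lemma: cb (x+1) ≤ cb x + log2 x -/
lemma cb_succ_le : ∀ x : ℕ, 1 ≤ x → cb (x + 1) ≤ cb x + Nat.log 2 x := by
  intro x
  induction x using Nat.strong_induction_on with
  | _ x IH =>
    intro hx
    rcases Nat.lt_or_ge x 2 with h | h
    · have : x = 1 := by omega
      subst this; simp [cb_two, cb_one]
    rcases Nat.even_or_odd x with ⟨t, ht⟩ | ⟨t, ht⟩
    · -- x = 2t, t ≥ 1
      have ht1 : 1 ≤ t := by omega
      have e1 : cb (x + 1) = cb (t + 1) + cb t + 1 := by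
        rw [cb_rec (x+1) (by omega)]
        have : (x + 1 + 1) / 2 = t + 1 := by omega
        rw [this]
        have : (x + 1) / 2 = t := by omega
        rw [this]; omega
      have e2 : cb x = cb t + cb t := by
        rw [cb_rec x (by omega)]
        have : (x + 1) / 2 = t := by omega
        rw [this]
        have : x / 2 = t := by omega
        rw [this]; omega
      have e3 : Nat.log 2 x = Nat.log 2 t + 1 := by
        rw [show x = t * 2 by omega]
        exact Nat.log_mul_base (by norm_num) (by omega)
      have := IH t (by omega) ht1
      omega
    · -- x = 2t+1, t ≥ 1
      have ht1 : 1 ≤ t := by omega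
      have e1 : cb (x + 1) = cb (t + 1) + cb (t + 1) := by
        rw [cb_rec (x+1) (by omega)]
        have h1 : (x + 1 + 1) / 2 = t + 1 := by omega
        have h2 : (x + 1) / 2 = t + 1 := by omega
        rw [h1, h2]; omega
      have e2 : cb x = cb (t + 1) + cb t + 1 := by
        rw [cb_rec x (by omega)]
        have h1 : (x + 1) / 2 = t + 1 := by omega
        have h2 : x / 2 = t := by omega
        rw [h1, h2]; omega
      have hlog : Nat.log 2 t ≤ Nat.log 2 x := Nat.log_mono_right (by omega)
      have := IH t (by omega) ht1
      omega


def Mfun (s : ℕ) : ℕ := min (s - 2 ^ Nat.log 2 s) (2 ^ Nat.clog 2 s - s)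

lemma log2_eq {L t : ℕ} (h1 : 2 ^ L ≤ t) (h2 : t < 2 ^ (L + 1)) : Nat.log 2 t = L :=
  Nat.log_eq_of_pow_le_of_lt_pow h1 h2

lemma clog2_eq {L t : ℕ} (h1 : 2 ^ L < t) (h2 : t ≤ 2 ^ (L + 1)) : Nat.clog 2 t = L + 1 := by
  have hle : Nat.clog 2 t ≤ L + 1 := (Nat.clog_le_iff_le_pow (by norm_num)).mpr h2
  have hgt : L < Nat.clog 2 t := (Nat.lt_clog_iff_pow_lt (by norm_num)).mpr h1
  omega

lemma Mfun_pow (L : ℕ) : Mfun (2 ^ L) = 0 := by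
  unfold Mfun
  rw [Nat.log_pow (by norm_num) L, Nat.clog_pow 2 L (by norm_num)]
  omega

lemma Mfun_between {L t : ℕ} (h1 : 2 ^ L < t) (h2 : t < 2 ^ (L + 1)) :
    Mfun t = min (t - 2 ^ L) (2 ^ (L + 1) - t) := by
  unfold Mfun
  rw [log2_eq (by omega) h2, clog2_eq h1 (by omega)]

lemma log2_ge_one {s : ℕ} (hs : 2 ≤ s) : 1 ≤ Nat.log 2 s := by
  have := (Nat.le_log_iff_pow_le (b := 2) (by norm_num) (show s ≠ 0 by omega)).mpr
    (show 2 ^ 1 ≤ s by simpa using hs)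
  exact this

lemma Mparity {s : ℕ} (hs : 2 ≤ s) : Mfun s % 2 = s % 2 := by
  set L := Nat.log 2 s with hL
  have hL1 : 2 ^ L ≤ s := Nat.pow_log_le_self 2 (by omega)
  have hL2 : s < 2 ^ (L + 1) := Nat.lt_pow_succ_log_self (by norm_num) s
  have hLpos : 1 ≤ L := log2_ge_one hs
  have hE : 2 ^ L = 2 * 2 ^ (L - 1) := by
    rw [← pow_succ']; congr 1; omega
  rcases eq_or_lt_of_le hL1 with he | hlt
  · -- s = 2 ^ L
    have : Mfun s = 0 := by rw [← he]; exact Mfun_pow L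
    omega
  · rw [Mfun_between hlt hL2]
    have : (2:ℕ) ^ (L + 1) = 2 * 2 ^ L := by rw [pow_succ]; ring
    omega

lemma Mhalf {s h : ℕ} (hs : 2 ≤ s) (hh : h = (s + 1) / 2 ∨ h = s / 2) :
    2 * Mfun h ≤ Mfun s + 1 := by
  set L := Nat.log 2 s with hL
  have hL1 : 2 ^ L ≤ s := Nat.pow_log_le_self 2 (by omega)
  have hL2 : s < 2 ^ (L + 1) := Nat.lt_pow_succ_log_self (by norm_num) s
  have hLpos : 1 ≤ L := log2_ge_one hs
  have hE : 2 ^ L = 2 * 2 ^ (L - 1) := by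
    rw [← pow_succ']; congr 1; omega
  have hE2 : (2:ℕ) ^ (L + 1) = 2 * 2 ^ L := by rw [pow_succ]; ring
  rcases eq_or_lt_of_le hL1 with he | hlt
  · -- s = 2 ^ L, h = 2 ^ (L-1)
    have hhp : h = 2 ^ (L - 1) := by omega
    rw [hhp, Mfun_pow]
    omega
  · -- 2^L < s < 2^(L+1)
    have hMs : Mfun s = min (s - 2 ^ L) (2 ^ (L + 1) - s) := Mfun_between hlt hL2
    have hb1 : 2 ^ (L - 1) ≤ h := by omega
    have hb2 : h ≤ 2 ^ L := by omega
    rcases eq_or_lt_of_le hb1 with he1 | hlt1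
    · rw [← he1, Mfun_pow]; omega
    rcases eq_or_lt_of_le hb2 with he2 | hlt2
    · rw [he2, Mfun_pow]; omega
    have hMh : Mfun h = min (h - 2 ^ (L - 1)) (2 ^ L - h) := by
      have e := Mfun_between (L := L - 1) (t := h) hlt1 (by omega)
      rw [show L - 1 + 1 = L by omega] at e
      exact e
    omega


lemma cb_pair {h h' s : ℕ} (h1 : h + h' = s) (h2 : 1 ≤ h) (h3 : 1 ≤ h')
    (h4 : h ≤ h' + 1) (h5 : h' ≤ h + 1) : cb s = cb h + cb h' + s % 2 := by
  rcases le_total h' h with hle | hle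
  · have e1 : (s + 1) / 2 = h := by omega
    have e2 : s / 2 = h' := by omega
    rw [cb_rec s (by omega), e1, e2]
  · have e1 : (s + 1) / 2 = h' := by omega
    have e2 : s / 2 = h := by omega
    rw [cb_rec s (by omega), e1, e2]; omega

lemma Q : ∀ s x y : ℕ, x + y = s → 1 ≤ y → y ≤ x →
    cb s ≤ cb x + cb y + (x - y) ∧
    (Mfun s < x - y → cb s < cb x + cb y + (x - y)) := by
  intro s
  induction s using Nat.strong_induction_on with
  | _ s IH =>
    intro x y hsum hy hyx
    rcases eq_or_lt_of_le hyx with heq | hlt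
    · -- x = y
      subst heq
      have e : cb s = cb y + cb y := by
        rw [cb_pair (h := y) (h' := y) (by omega) (by omega) (by omega) (by omega) (by omega)]
        omega
      constructor
      · omega
      · intro hM; omega
    rcases eq_or_lt_of_le hy with hy1 | hy2
    · -- y = 1, x ≥ 2
      have hx2 : 2 ≤ x := by omega
      have hD : cb (x + 1) ≤ cb x + Nat.log 2 x := cb_succ_le x (by omega)
      have hlog : Nat.log 2 x < x := Nat.log_lt_self 2 (by omega)
      have hs : s = x + 1 := by omega
      subst hs
      rcases eq_or_lt_of_le hx2 with hx2' | hx3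
    -- x = 2
      · have hx : x = 2 := by omega
        subst hx
        have hM3 : Mfun 3 = 1 := by
          rw [Mfun_between (L := 1) (by norm_num) (by norm_num)]; norm_num
        constructor
        · have : cb 1 = 0 := cb_one
          omega
        · intro hcon; rw [hM3] at hcon; omega
      · -- x ≥ 3
        have hlog2 : Nat.log 2 x ≤ x - 2 := by
          have h2p : x < 2 ^ (x - 1) := lt_two_pow_pred x (by omega)
          have := (Nat.log_lt_iff_lt_pow (b := 2) (by norm_num) (show x ≠ 0 by omega)).mpr h2p
          omega
        have hcb1 : cb 1 = 0 := cb_one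
        constructor
        · omega
        · intro _; omega
    · -- x > y ≥ 2, main case
      have hx3 : 3 ≤ x := by omega
      have hdx : cb x = cb ((x+1)/2) + cb (x/2) + x % 2 := cb_rec x (by omega)
      have hdy : cb y = cb ((y+1)/2) + cb (y/2) + y % 2 := cb_rec y (by omega)
      set x1 := (x+1)/2 with hx1d
      set x2 := x/2 with hx2d
      set y1 := (y+1)/2 with hy1d
      set y2 := y/2 with hy2d
      have hpair : cb s = cb (x1 + y2) + cb (x2 + y1) + s % 2 := by
        apply cb_pair (by omega) (by omega) (by omega) (by omega) (by omega)
      have hQ1 := IH (x1 + y2) (by omega) x1 y2 rfl (by omega) (by omega)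
      have hQ2 := IH (x2 + y1) (by omega) x2 y1 rfl (by omega) (by omega)
      constructor
      · omega
      · intro hM
        have hpar : Mfun s % 2 = s % 2 := Mparity (by omega)
        have hMh : 2 * Mfun (x1 + y2) ≤ Mfun s + 1 :=
          Mhalf (by omega) (by omega)
        have hstrict := hQ1.2 (by omega)
        omega


lemma leaves_pos : ∀ T : FBT, 1 ≤ T.leaves := by
  intro T
  induction T with
  | leaf => simp [FBT.leaves]
  | node a b iha ihb => simp [FBT.leaves]; omega

lemma cb_le_colless : ∀ T : FBT, cb T.leaves ≤ T.colless := by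
  intro T
  induction T with
  | leaf => simp [FBT.leaves, FBT.colless, cb_one]
  | node a b iha ihb =>
    have ha := leaves_pos a
    have hb := leaves_pos b
    simp only [FBT.leaves, FBT.colless, Nat.dist]
    rcases le_total b.leaves a.leaves with hle | hle
    · have := (Q (a.leaves + b.leaves) a.leaves b.leaves rfl hb hle).1
      omega
    · have := (Q (a.leaves + b.leaves) b.leaves a.leaves (by omega) ha hle).1
      omega

lemma exists_cb_tree : ∀ n : ℕ, 1 ≤ n → ∃ T : FBT, T.leaves = n ∧ T.colless = cb n := by
  intro n
  induction n using Nat.strong_induction_on with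
  | _ n IH =>
    intro hn
    rcases eq_or_lt_of_le hn with h1 | h2
    · exact ⟨FBT.leaf, by simp [FBT.leaves, ← h1], by simp [FBT.colless, ← h1, cb_one]⟩
    · obtain ⟨T1, hT1l, hT1c⟩ := IH ((n+1)/2) (by omega) (by omega)
      obtain ⟨T2, hT2l, hT2c⟩ := IH (n/2) (by omega) (by omega)
      refine ⟨FBT.node T1 T2, by simp [FBT.leaves, hT1l, hT2l]; omega, ?_⟩
      simp only [FBT.colless, hT1c, hT2c, hT1l, hT2l, Nat.dist]
      rw [cb_rec n (by omega)]
      omega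

lemma minColless_le_cb (n : ℕ) (hn : 1 ≤ n) : minColless n ≤ cb n := by
  obtain ⟨T, h1, h2⟩ := exists_cb_tree n hn
  exact Nat.sInf_le ⟨T, h1, h2⟩

end ColAux

theorem extreme_partition_not_minimal (a b : FBT) (n k : ℕ)
    (hn : n = (FBT.node a b).leaves) (hk : k = Nat.clog 2 n)
    (h1 : 2 ^ (k - 1) < n) (h2 : n < 2 ^ k)
    (hab : b.leaves ≤ a.leaves)
    (hextreme : a.leaves - b.leaves > min (n - 2 ^ (k - 1)) (2 ^ k - n)) :
    (FBT.node a b).colless > minColless n := by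
  have ha := ColAux.leaves_pos a
  have hb := ColAux.leaves_pos b
  have hnl : n = a.leaves + b.leaves := hn
  have hk1 : 1 ≤ k := by
    by_contra h
    have : k = 0 := by omega
    subst this
    simp at h1 h2
    omega
  have hn2 : 2 ≤ n := by omega
  -- log2 n = k - 1
  have hlog : Nat.log 2 n = k - 1 := by
    have hge : k - 1 ≤ Nat.log 2 n :=
      (Nat.le_log_iff_pow_le (by norm_num) (by omega)).mpr (le_of_lt h1)
    have hlt : Nat.log 2 n < k :=
      (Nat.log_lt_iff_lt_pow (by norm_num) (by omega)).mpr h2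
    omega
  have hM : ColAux.Mfun n = min (n - 2 ^ (k - 1)) (2 ^ k - n) := by
    unfold ColAux.Mfun
    rw [hlog, ← hk]
  have hQ := (ColAux.Q n a.leaves b.leaves (by omega) hb hab).2 (by omega)
  have hCa := ColAux.cb_le_colless a
  have hCb := ColAux.cb_le_colless b
  have hmin := ColAux.minColless_le_cb n (by omega)
  have hcol : (FBT.node a b).colless
      = a.colless + b.colless + Nat.dist a.leaves b.leaves := rfl
  have hdist : Nat.dist a.leaves b.leaves = a.leaves - b.leaves := by
    simp [Nat.dist]; omega
  omega
end

section
/- Let T = node(T_a, T_b) be a full binary tree with n ≥ 2 leaves and minimal Colless index, i.e. C(T) = c(n), where the maximal pending subtrees have n_a and n_b leaves with n_a ≥ n_b, and let k = ⌈log₂ n⌉. Then ⌈n/2⌉ ≤ n_a, and moreover n_a ≤ n − 2^{k−2} if 2^{k−1} < n < 3·2^{k−2}, while n_a ≤ 2^{k−1} if 3·2^{k−2} ≤ n ≤ 2^k; equivalently, the root leaf partition of T lies between that of the maximally balanced tree and that of the greedy-from-the-bottom tree. -/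
namespace MCAux

/-- Colless index of the maximally balanced tree. -/
def cb (n : ℕ) : ℕ :=
  if h : n ≤ 1 then 0 else cb (n / 2) + cb ((n + 1) / 2) + n % 2
decreasing_by all_goals omega

lemma cb_zero : cb 0 = 0 := by simp [cb]
lemma cb_one : cb 1 = 0 := by simp [cb]

lemma cb_two_mul (m : ℕ) : cb (2 * m) = 2 * cb m := by
  rcases Nat.eq_zero_or_pos m with h | h
  · subst h; simp [cb]
  · have h1 : 2 * m / 2 = m := by omega
    have h2 : (2 * m + 1) / 2 = m := by omega
    rw [cb, dif_neg (by omega), h1, h2]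
    omega

lemma cb_odd (m : ℕ) (hm : 1 ≤ m) : cb (2 * m + 1) = cb m + cb (m + 1) + 1 := by
  have h1 : (2 * m + 1) / 2 = m := by omega
  have h2 : (2 * m + 1 + 1) / 2 = m + 1 := by omega
  rw [cb, dif_neg (by omega), h1, h2]
  omega

lemma cb_two : cb 2 = 0 := by
  have := cb_two_mul 1
  norm_num [cb_one] at this
  exact this

lemma cb_three : cb 3 = 1 := by
  have := cb_odd 1 le_rfl
  norm_num [cb_one, cb_two] at this
  exact this

/-- Upper bound for the larger root part of a minimal tree. -/
def A (n : ℕ) : ℕ := min (2 ^ (Nat.clog 2 n - 1)) (n - 2 ^ (Nat.clog 2 n - 2))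

lemma clog2_two : Nat.clog 2 2 = 1 := Nat.clog_eq_one (by norm_num) (by norm_num)

lemma clog2_three : Nat.clog 2 3 = 2 := by
  refine le_antisymm ((Nat.clog_le_iff_le_pow one_lt_two).2 (by norm_num)) ?_
  by_contra h
  have h1 : Nat.clog 2 3 ≤ 1 := by omega
  have h2 := (Nat.clog_le_iff_le_pow (one_lt_two)).1 h1
  norm_num at h2

lemma clog2_lb {n : ℕ} (h : 2 ≤ n) : 2 ^ (Nat.clog 2 n - 1) < n := by
  simpa using Nat.pow_pred_clog_lt_self one_lt_two (by omega : 1 < n)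

lemma clog2_ub (n : ℕ) : n ≤ 2 ^ Nat.clog 2 n := Nat.le_pow_clog one_lt_two n

lemma clog2_two_mul {m : ℕ} (hm : 1 ≤ m) : Nat.clog 2 (2 * m) = Nat.clog 2 m + 1 := by
  rcases eq_or_lt_of_le hm with h | h
  · rw [← h]; simpa [Nat.clog_one_right] using clog2_two
  · refine le_antisymm ((Nat.clog_le_iff_le_pow one_lt_two).2 ?_) ?_
    · have := clog2_ub m
      calc 2 * m ≤ 2 * 2 ^ Nat.clog 2 m := by omega
        _ = 2 ^ (Nat.clog 2 m + 1) := by ring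
    · by_contra hc
      have h1 : Nat.clog 2 (2 * m) ≤ Nat.clog 2 m := by omega
      have h2 := (Nat.clog_le_iff_le_pow one_lt_two).1 h1
      have h3 := clog2_lb (by omega : 2 ≤ m)
      have hk : 1 ≤ Nat.clog 2 m := Nat.clog_pos one_lt_two (by omega)
      have h4 : 2 ^ Nat.clog 2 m = 2 * 2 ^ (Nat.clog 2 m - 1) := by
        rw [← pow_succ']
        congr 1
        omega
      omega

lemma clog2_two_mul_add_one {m : ℕ} (hm : 1 ≤ m) :
    Nat.clog 2 (2 * m + 1) = Nat.clog 2 (m + 1) + 1 := by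
  refine le_antisymm ((Nat.clog_le_iff_le_pow one_lt_two).2 ?_) ?_
  · have := clog2_ub (m + 1)
    calc 2 * m + 1 ≤ 2 * (m + 1) := by omega
      _ ≤ 2 * 2 ^ Nat.clog 2 (m + 1) := by omega
      _ = 2 ^ (Nat.clog 2 (m + 1) + 1) := by ring
  · by_contra hc
    have h1 : Nat.clog 2 (2 * m + 1) ≤ Nat.clog 2 (m + 1) := by omega
    have h2 := (Nat.clog_le_iff_le_pow one_lt_two).1 h1
    have h3 := clog2_lb (by omega : 2 ≤ m + 1)
    have hk : 1 ≤ Nat.clog 2 (m + 1) := Nat.clog_pos one_lt_two (by omega)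
    have h4 : 2 ^ Nat.clog 2 (m + 1) = 2 * 2 ^ (Nat.clog 2 (m + 1) - 1) := by
      rw [← pow_succ']
      congr 1
      omega
    omega

lemma A_zero : A 0 = 0 := by simp [A]
lemma A_one : A 1 = 0 := by simp [A, Nat.clog_one_right]
lemma A_two : A 2 = 1 := by simp [A, clog2_two]
lemma A_three : A 3 = 2 := by simp [A, clog2_three]
lemma clog2_four : Nat.clog 2 4 = 2 := by
  have := clog2_two_mul (m := 2) (by norm_num)
  rw [clog2_two] at this; norm_num at this; norm_num
lemma clog2_five : Nat.clog 2 5 = 3 := by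
  have := clog2_two_mul_add_one (m := 2) (by norm_num)
  rw [clog2_three] at this; norm_num at this; norm_num
lemma clog2_seven : Nat.clog 2 7 = 3 := by
  have := clog2_two_mul_add_one (m := 3) (by norm_num)
  rw [clog2_four] at this; norm_num at this; norm_num
lemma A_four : A 4 = 2 := by simp [A, clog2_four]
lemma A_five : A 5 = 3 := by simp [A, clog2_five]
lemma A_seven : A 7 = 4 := by simp [A, clog2_seven]

lemma pow_sub_one {j : ℕ} (hj : 1 ≤ j) : 2 ^ j = 2 * 2 ^ (j - 1) := by
  rw [← pow_succ']; congr 1; omega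

lemma pow_sub_two {j : ℕ} (hj : 2 ≤ j) : 2 ^ (j - 1) = 2 * 2 ^ (j - 2) := by
  rw [← pow_succ']; congr 1; omega

lemma clog2_ge_two {m : ℕ} (h : 3 ≤ m) : 2 ≤ Nat.clog 2 m := by
  by_contra hc
  have h2 := (Nat.clog_le_iff_le_pow (one_lt_two) (x := m) (y := 1)).1 (by omega)
  norm_num at h2
  omega

lemma half_le_A {n : ℕ} (hn : 2 ≤ n) : (n + 1) / 2 ≤ A n := by
  have hub := clog2_ub n
  have hlb := clog2_lb hn
  rcases lt_or_ge n 3 with h3 | h3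
  · have : n = 2 := by omega
    subst this
    rw [A_two]
  · have hk2 := clog2_ge_two h3
    have hs2 := pow_sub_two hk2
    have hs1 := pow_sub_one (by omega : 1 ≤ Nat.clog 2 n)
    have hx : 1 ≤ 2 ^ (Nat.clog 2 n - 2) := Nat.one_le_two_pow
    rw [A]
    omega

lemma A_two_mul_le (m : ℕ) : 2 * A m ≤ A (2 * m) := by
  rcases lt_or_ge m 3 with h | h
  · interval_cases m
    · simp [A_zero]
    · simp [A_one]
    · rw [A_two]; show 2 ≤ A 4; rw [A_four]
  · have hub := clog2_ub m
    have hlb := clog2_lb (by omega : 2 ≤ m)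
    have h2m : Nat.clog 2 (2 * m) = Nat.clog 2 m + 1 := clog2_two_mul (by omega)
    have hj2 := clog2_ge_two h
    have hs2 := pow_sub_two hj2
    have hs1 := pow_sub_one (by omega : 1 ≤ Nat.clog 2 m)
    rw [A, A, h2m]
    have e1 : Nat.clog 2 m + 1 - 1 = Nat.clog 2 m := by omega
    have e2 : Nat.clog 2 m + 1 - 2 = Nat.clog 2 m - 1 := by omega
    rw [e1, e2]
    omega

lemma A_odd_left (m : ℕ) : 2 * A m ≤ A (2 * m + 1) := by
  rcases lt_or_ge m 4 with h | h
  · interval_cases m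
    · simp [A_zero]
    · simp [A_one]
    · rw [A_two]; show 2 ≤ A 5; rw [A_five]; omega
    · rw [A_three]; show 4 ≤ A 7; rw [A_seven]
  · have hub := clog2_ub m
    have hlb := clog2_lb (by omega : 2 ≤ m)
    have hub2 := clog2_ub (m + 1)
    have hlb2 := clog2_lb (by omega : 2 ≤ m + 1)
    have hmono : Nat.clog 2 m ≤ Nat.clog 2 (m + 1) := Nat.clog_mono_right 2 (by omega)
    have hup : Nat.clog 2 (m + 1) ≤ Nat.clog 2 m + 1 := by
      refine (Nat.clog_le_iff_le_pow one_lt_two).2 ?_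
      have := pow_succ' 2 (Nat.clog 2 m)
      omega
    have hn : Nat.clog 2 (2 * m + 1) = Nat.clog 2 (m + 1) + 1 :=
      clog2_two_mul_add_one (by omega)
    have hj2 := clog2_ge_two (by omega : 3 ≤ m)
    have hs2 := pow_sub_two hj2
    have hs1 := pow_sub_one (by omega : 1 ≤ Nat.clog 2 m)
    rcases (by omega : Nat.clog 2 (m + 1) = Nat.clog 2 m ∨
        Nat.clog 2 (m + 1) = Nat.clog 2 m + 1) with hcase | hcase
    · rw [A, A, hn, hcase]
      have e1 : Nat.clog 2 m + 1 - 1 = Nat.clog 2 m := by omega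
      have e2 : Nat.clog 2 m + 1 - 2 = Nat.clog 2 m - 1 := by omega
      rw [e1, e2]
      omega
    · have hmeq : m = 2 ^ Nat.clog 2 m := by
        have hnot : ¬ (m + 1 ≤ 2 ^ Nat.clog 2 m) := by
          intro hle
          have h5 := (Nat.clog_le_iff_le_pow one_lt_two).2 hle
          omega
        omega
      rw [A, A, hn, hcase]
      have e1 : Nat.clog 2 m + 1 + 1 - 1 = Nat.clog 2 m + 1 := by omega
      have e2 : Nat.clog 2 m + 1 + 1 - 2 = Nat.clog 2 m := by omega
      rw [e1, e2]
      have hs0 := pow_succ' 2 (Nat.clog 2 m)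
      omega

lemma A_odd_right {m : ℕ} (hm : 1 ≤ m) : 2 * A (m + 1) - 1 ≤ A (2 * m + 1) := by
  rcases lt_or_ge m 2 with h | h
  · have : m = 1 := by omega
    subst this
    show 2 * A 2 - 1 ≤ A 3
    rw [A_two, A_three]
    omega
  · have hub2 := clog2_ub (m + 1)
    have hlb2 := clog2_lb (by omega : 2 ≤ m + 1)
    have hn : Nat.clog 2 (2 * m + 1) = Nat.clog 2 (m + 1) + 1 :=
      clog2_two_mul_add_one (by omega)
    have hj2 := clog2_ge_two (by omega : 3 ≤ m + 1)
    have hs2 := pow_sub_two hj2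
    have hs1 := pow_sub_one (by omega : 1 ≤ Nat.clog 2 (m + 1))
    rw [A, A, hn]
    have e1 : Nat.clog 2 (m + 1) + 1 - 1 = Nat.clog 2 (m + 1) := by omega
    have e2 : Nat.clog 2 (m + 1) + 1 - 2 = Nat.clog 2 (m + 1) - 1 := by omega
    rw [e1, e2]
    omega

/-- The key lemma: `cb` is a lower bound for any root split, and any split attaining
equality has its larger part bounded by `A`. -/
theorem key (n : ℕ) : ∀ a b : ℕ, a + b = n → b ≤ a →
    cb n ≤ cb a + cb b + (a - b) ∧ (cb a + cb b + (a - b) = cb n → a ≤ A n) := by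
  induction n using Nat.strong_induction_on with
  | _ n IH =>
  intro a b hab hba
  obtain ⟨p, hp | hp⟩ := Nat.even_or_odd' a <;> obtain ⟨q, hq | hq⟩ := Nat.even_or_odd' b <;>
    subst hp hq hab
  · -- a = 2p, b = 2q
    rcases Nat.eq_zero_or_pos (p + q) with h0 | h1
    · have hp0 : p = 0 := by omega
      have hq0 : q = 0 := by omega
      subst hp0 hq0
      simp [cb_zero, A_zero]
    · have hIH := IH (p + q) (by omega) p q rfl (by omega)
      have e : 2 * p + 2 * q = 2 * (p + q) := by ring
      rw [e, cb_two_mul, cb_two_mul, cb_two_mul]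
      have hA := A_two_mul_le (p + q)
      constructor
      · omega
      · intro heq
        have e1 : cb p + cb q + (p - q) = cb (p + q) := by omega
        have := hIH.2 e1
        omega
  · -- a = 2p, b = 2q+1
    have hqp : q < p := by omega
    rcases Nat.eq_zero_or_pos q with h0 | h1
    · subst h0
      rcases (by omega : p = 1 ∨ 2 ≤ p) with h1 | h2
      · subst h1
        norm_num [cb_two, cb_one, cb_three, A_three]
      · have hB : cb (2 * p + 1) = cb p + cb (p + 1) + 1 := cb_odd p (by omega)
        have hA : cb (2 * p) = 2 * cb p := cb_two_mul p
        have hIH1 := (IH (p + 1) (by omega) p 1 (by omega) (by omega)).1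
        rw [cb_one] at hIH1 ⊢
        have e : 2 * p + (2 * 0 + 1) = 2 * p + 1 := by ring
        rw [e, hB]
        constructor
        · omega
        · intro heq; exfalso; omega
    · have hIH_a := IH (p + q) (by omega) p q rfl (by omega)
      have hIH_b := IH (p + q + 1) (by omega) p (q + 1) (by omega) (by omega)
      have hA : cb (2 * p) = 2 * cb p := cb_two_mul p
      have hB : cb (2 * q + 1) = cb q + cb (q + 1) + 1 := cb_odd q h1
      have e : 2 * p + (2 * q + 1) = 2 * (p + q) + 1 := by ring
      rw [e, cb_odd (p + q) (by omega), hA, hB]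
      constructor
      · omega
      · intro heq
        have e1 : cb p + cb q + (p - q) = cb (p + q) := by omega
        have e2 : cb p + cb (q + 1) + (p - (q + 1)) = cb (p + q + 1) := by omega
        have h2 := hIH_a.2 e1
        have hAo := A_odd_left (p + q)
        omega
  · -- a = 2p+1, b = 2q
    rcases Nat.eq_zero_or_pos q with h0 | h1
    · subst h0
      rw [cb_zero]
      have e : 2 * p + 1 + 2 * 0 = 2 * p + 1 := by ring
      rw [e]
      constructor
      · omega
      · intro heq; exfalso; omega
    · have hpq : q ≤ p := by omega
      have hIH_a := IH (p + q) (by omega) p q rfl (by omega)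
      have hIH_b := IH (p + q + 1) (by omega) (p + 1) q (by omega) (by omega)
      have hA : cb (2 * p + 1) = cb p + cb (p + 1) + 1 := cb_odd p (by omega)
      have hB : cb (2 * q) = 2 * cb q := cb_two_mul q
      have e : 2 * p + 1 + 2 * q = 2 * (p + q) + 1 := by ring
      rw [e, cb_odd (p + q) (by omega), hA, hB]
      constructor
      · omega
      · intro heq
        have e1 : cb p + cb q + (p - q) = cb (p + q) := by omega
        have e2 : cb (p + 1) + cb q + (p + 1 - q) = cb (p + q + 1) := by omega
        have h2 := hIH_b.2 e2
        have hAo := A_odd_right (m := p + q) (by omega)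
        omega
  · -- a = 2p+1, b = 2q+1
    have hpq : q ≤ p := by omega
    rcases eq_or_lt_of_le hpq with hEq | hLt
    · subst hEq
      have e : 2 * q + 1 + (2 * q + 1) = 2 * (2 * q + 1) := by ring
      rw [e, cb_two_mul]
      constructor
      · omega
      · intro _
        have := half_le_A (n := 2 * (2 * q + 1)) (by omega)
        omega
    · rcases Nat.eq_zero_or_pos q with h0 | h1
      · subst h0
        have hA : cb (2 * p + 1) = cb p + cb (p + 1) + 1 := cb_odd p (by omega)
        have hIH1 := (IH (p + 1) (by omega) p 1 (by omega) (by omega)).1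
        rw [cb_one] at hIH1 ⊢
        have e : 2 * p + 1 + (2 * 0 + 1) = 2 * (p + 1) := by ring
        rw [e, cb_two_mul, hA]
        constructor
        · omega
        · intro heq; exfalso; omega
      · have hIH_a := IH (p + q + 1) (by omega) (p + 1) q (by omega) (by omega)
        have hIH_b := IH (p + q + 1) (by omega) p (q + 1) (by omega) (by omega)
        have hA : cb (2 * p + 1) = cb p + cb (p + 1) + 1 := cb_odd p (by omega)
        have hB : cb (2 * q + 1) = cb q + cb (q + 1) + 1 := cb_odd q h1
        have e : 2 * p + 1 + (2 * q + 1) = 2 * (p + q + 1) := by ring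
        rw [e, cb_two_mul, hA, hB]
        have h1' := hIH_a.1
        have h2' := hIH_b.1
        constructor
        · omega
        · intro heq; exfalso; omega

lemma leaves_pos (T : FBT) : 1 ≤ T.leaves := by
  induction T with
  | leaf => simp [FBT.leaves]
  | node a b iha ihb => simp only [FBT.leaves]; omega

lemma colless_ge (T : FBT) : cb T.leaves ≤ T.colless := by
  induction T with
  | leaf => simp [FBT.leaves, FBT.colless, cb_one]
  | node a b iha ihb =>
    simp only [FBT.leaves, FBT.colless, Nat.dist]
    rcases le_total b.leaves a.leaves with h | h
    · have hk := (key (a.leaves + b.leaves) a.leaves b.leaves rfl h).1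
      omega
    · have hk := (key (b.leaves + a.leaves) b.leaves a.leaves rfl h).1
      rw [Nat.add_comm a.leaves b.leaves]
      omega

/-- The maximally balanced tree. -/
def bal (n : ℕ) : FBT :=
  if h : n ≤ 1 then FBT.leaf else FBT.node (bal ((n + 1) / 2)) (bal (n / 2))
decreasing_by all_goals omega

lemma bal_leaves (n : ℕ) (h : 1 ≤ n) : (bal n).leaves = n := by
  induction n using Nat.strong_induction_on with
  | _ n IH =>
  rw [bal]
  split_ifs with h1
  · simp only [FBT.leaves]; omega
  · simp only [FBT.leaves]
    rw [IH ((n + 1) / 2) (by omega) (by omega), IH (n / 2) (by omega) (by omega)]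
    omega

lemma bal_colless (n : ℕ) (h : 1 ≤ n) : (bal n).colless = cb n := by
  induction n using Nat.strong_induction_on with
  | _ n IH =>
  rw [bal]
  split_ifs with h1
  · have : n = 1 := by omega
    subst this
    simp [FBT.colless, cb_one]
  · simp only [FBT.colless]
    rw [bal_leaves _ (by omega), bal_leaves _ (by omega),
      IH ((n + 1) / 2) (by omega) (by omega), IH (n / 2) (by omega) (by omega)]
    conv_rhs => rw [cb]
    rw [dif_neg h1]
    simp only [Nat.dist]
    omega

lemma minColless_eq {n : ℕ} (h : 1 ≤ n) : minColless n = cb n := by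
  refine le_antisymm (Nat.sInf_le ⟨bal n, bal_leaves n h, bal_colless n h⟩) ?_
  refine le_csInf ⟨cb n, bal n, bal_leaves n h, bal_colless n h⟩ ?_
  rintro m ⟨T, h1, h2⟩
  rw [← h2, ← h1]
  exact colless_ge T

end MCAux

theorem min_colless_root_partition_bounds (a b : FBT) (n k : ℕ)
    (hn : n = (FBT.node a b).leaves) (hn2 : 2 ≤ n)
    (hmin : (FBT.node a b).colless = minColless n)
    (hab : b.leaves ≤ a.leaves) (hk : k = Nat.clog 2 n) :
    (n + 1) / 2 ≤ a.leaves ∧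
    (2 ^ (k - 1) < n → n < 3 * 2 ^ (k - 2) → a.leaves ≤ n - 2 ^ (k - 2)) ∧
    (3 * 2 ^ (k - 2) ≤ n → n ≤ 2 ^ k → a.leaves ≤ 2 ^ (k - 1)) := by
  subst hk
  have hla := MCAux.leaves_pos a
  have hlb := MCAux.leaves_pos b
  have hnval : n = a.leaves + b.leaves := hn
  have hcol : a.colless + b.colless + Nat.dist a.leaves b.leaves = minColless n := hmin
  have hmc : minColless n = MCAux.cb n := MCAux.minColless_eq (by omega)
  have hga := MCAux.colless_ge a
  have hgb := MCAux.colless_ge b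
  have hkey := MCAux.key n a.leaves b.leaves hnval.symm hab
  have hd : Nat.dist a.leaves b.leaves = a.leaves - b.leaves := by
    simp only [Nat.dist]; omega
  have hFeq : MCAux.cb a.leaves + MCAux.cb b.leaves + (a.leaves - b.leaves) = MCAux.cb n := by
    have h1 := hkey.1
    omega
  have hA := hkey.2 hFeq
  rw [MCAux.A] at hA
  refine ⟨by omega, fun _ _ => ?_, fun _ _ => ?_⟩
  · exact le_trans hA (le_trans (min_le_right _ _) le_rfl)
  · exact le_trans hA (min_le_left _ _)
end
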